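/- arXiv:2602.11417 — 10 statements merged into one kernel-verified Lean document; each statement's English description precedes it below -/
import Mathlib

section
/- For any nonnegative collection profile X : Fin n → ℝ and any two agents i, j: if X i < X j then t_i(X) < t_j(X), and if X i = X j then t_i(X) = t_j(X). In particular the map X ↦ (t_1(X), …, t_n(X)) preserves the ranking of agents. -/
open Finset

/-- Agent `i`'s total accessible data under fair exchange. -/
noncomputable def total {n : ℕ} (X : Fin n → ℝ) (i : Fin n) : ℝ :=
  X i + ∑ j ∈ univ.filter (fun j => j ≠ i), min (X i) (X j)

lemma total_eq_sum {n : ℕ} (X : Fin n → ℝ) (i : Fin n) :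
    total X i = ∑ k, min (X i) (X k) := by
  rw [total, filter_ne' univ i]
  nth_rewrite 1 [← min_self (X i)]
  exact Finset.add_sum_erase univ (fun k => min (X i) (X k)) (mem_univ i)

/-- The fair-exchange transform preserves the ranking of agents: if `X i < X j` then
`t_i(X) < t_j(X)`, and if `X i = X j` then `t_i(X) = t_j(X)`. -/
theorem total_preserves_ranking (n : ℕ) (X : Fin n → ℝ) (hX : ∀ i, 0 ≤ X i)
    (i j : Fin n) :
    (X i < X j → total X i < total X j) ∧ (X i = X j → total X i = total X j) := by
  rw [total_eq_sum, total_eq_sum]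
  constructor
  · intro h
    refine Finset.sum_lt_sum (fun k _ => min_le_min (le_of_lt h) le_rfl) ⟨j, mem_univ j, ?_⟩
    rw [min_self]
    exact min_lt_iff.mpr (Or.inl h)
  · intro h
    rw [h]
end

section
/- The fair-exchange forward transform Φ, sending a nonnegative collection profile X : Fin n → ℝ to the total-data profile Φ(X) = (t_1(X), …, t_n(X)), is injective on the set of nonnegative profiles: if X and X' are nonnegative profiles with t_i(X) = t_i(X') for every agent i, then X = X'. -/
open Finset

lemma key_strict {n : ℕ} (X X' : Fin n → ℝ) (i : Fin n) (hi : X i < X' i)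
    (hmin : ∀ j, X j ≠ X' j → min (X i) (X' i) ≤ min (X j) (X' j)) :
    total X i < total X' i := by
  unfold total
  have hterm : ∀ j ∈ univ.filter (fun j => j ≠ i),
      min (X i) (X j) ≤ min (X' i) (X' j) := by
    intro j _
    by_cases hj : X j = X' j
    · rw [hj]; exact min_le_min hi.le le_rfl
    · have h1 := hmin j hj
      rw [min_eq_left hi.le] at h1
      have h2 : X i ≤ X j := le_trans h1 (min_le_left _ _)
      have h3 : X i ≤ X' j := le_trans h1 (min_le_right _ _)
      calc min (X i) (X j) = X i := min_eq_left h2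
        _ ≤ min (X' i) (X' j) := le_min hi.le h3
  exact add_lt_add_of_lt_of_le hi (Finset.sum_le_sum hterm)

/-- The forward transform `Φ` sending a nonnegative collection profile to its total-data
profile is injective on nonnegative profiles. -/
theorem forward_transform_injective (n : ℕ) (X X' : Fin n → ℝ)
    (hX : ∀ i, 0 ≤ X i) (hX' : ∀ i, 0 ≤ X' i)
    (h : ∀ i, total X i = total X' i) : X = X' := by
  by_contra hne
  have hex : ∃ i, X i ≠ X' i := by
    by_contra h2; push_neg at h2; exact hne (funext h2)
  obtain ⟨i0, hi0⟩ := hex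
  set S := univ.filter (fun i => X i ≠ X' i) with hSdef
  have hS : S.Nonempty := ⟨i0, by simp [hSdef, hi0]⟩
  obtain ⟨i, hiS, hmin⟩ := S.exists_min_image (fun j => min (X j) (X' j)) hS
  have hne_i : X i ≠ X' i := by simpa [hSdef] using hiS
  have hmin' : ∀ j, X j ≠ X' j → min (X i) (X' i) ≤ min (X j) (X' j) := by
    intro j hj; exact hmin j (by simp [hSdef, hj])
  rcases lt_or_gt_of_ne hne_i with hlt | hgt
  · exact absurd (h i) (ne_of_lt (key_strict X X' i hlt hmin'))
  · have hk := key_strict X' X i hgt (fun j hj => by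
      rw [min_comm (X' i), min_comm (X' j)]; exact hmin' j (Ne.symm hj))
    exact absurd (h i) (ne_of_gt hk)
end

section
/- Local equilibrium constraints suffice in the fair-exchange game: let X be a nonnegative collection profile such that for every agent i there exists ε > 0 with U_i(y, X_{−i}) ≤ U_i(X) for all y ≥ 0 satisfying |y − X i| < ε (i.e., X i is a local maximizer of i's own-payoff given the others). Then X is a pure Nash equilibrium, i.e., for every agent i and every y ≥ 0, U_i(y, X_{−i}) ≤ U_i(X). -/
open Finset

/-- Agent `i`'s utility. -/
noncomputable def U {n : ℕ} (b : Fin n → ℝ → ℝ) (c : Fin n → ℝ)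
    (X : Fin n → ℝ) (i : Fin n) : ℝ :=
  b i (total X i) - c i * X i

/-- A concave function on `[0, ∞)` with a local max at `x` has a global max at `x`. -/
lemma concave_local_max_global {f : ℝ → ℝ} (hf : ConcaveOn ℝ (Set.Ici 0) f)
    {x : ℝ} (hx : (0:ℝ) ≤ x) {ε : ℝ} (hε : 0 < ε)
    (h : ∀ y, 0 ≤ y → |y - x| < ε → f y ≤ f x) :
    ∀ y, 0 ≤ y → f y ≤ f x := by
  intro y hy
  by_contra hlt
  push_neg at hlt
  have hyx : y ≠ x := by rintro rfl; exact lt_irrefl _ hlt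
  have hd : 0 < |y - x| := abs_pos.mpr (sub_ne_zero.mpr hyx)
  set t : ℝ := min (ε / (2 * |y - x|)) (1/2) with ht
  have ht0 : 0 < t := lt_min (by positivity) (by norm_num)
  have ht1 : t < 1 := lt_of_le_of_lt (min_le_right _ _) (by norm_num)
  have hcomb := hf.2 (Set.mem_Ici.mpr hx) (Set.mem_Ici.mpr hy)
    (by linarith : (0:ℝ) ≤ 1 - t) (le_of_lt ht0) (by ring)
  set z : ℝ := (1 - t) * x + t * y with hz
  have hz0 : 0 ≤ z := by
    have : 0 ≤ (1 - t) * x := mul_nonneg (by linarith) hx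
    have : 0 ≤ t * y := mul_nonneg (le_of_lt ht0) hy
    simp only [hz]; nlinarith
  have hznear : |z - x| < ε := by
    have : z - x = t * (y - x) := by simp only [hz]; ring
    rw [this, abs_mul, abs_of_pos ht0]
    have h1 : t ≤ ε / (2 * |y - x|) := min_le_left _ _
    have : t * |y - x| ≤ ε / (2 * |y - x|) * |y - x| :=
      mul_le_mul_of_nonneg_right h1 (le_of_lt hd)
    have heq : ε / (2 * |y - x|) * |y - x| = ε / 2 := by
      field_simp
    linarith [hε]
  have hfz : f x < f z := by
    have : (1 - t) * f x + t * f y ≤ f z := by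
      simpa [hz, smul_eq_mul] using hcomb
    nlinarith
  exact absurd (h z hz0 hznear) (not_le.mpr hfz)

lemma T_concave {n : ℕ} (X : Fin n → ℝ) (i : Fin n) :
    ConcaveOn ℝ (Set.Ici 0) (fun y : ℝ => y + ∑ j ∈ univ.filter (fun j => j ≠ i), min y (X j)) := by
  refine ⟨convex_Ici 0, ?_⟩
  intro p hp q hq a d ha hd had
  simp only [smul_eq_mul]
  have hsum : ∑ j ∈ univ.filter (fun j => j ≠ i), (a * min p (X j) + d * min q (X j)) ≤
      ∑ j ∈ univ.filter (fun j => j ≠ i), min (a * p + d * q) (X j) := by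
    apply Finset.sum_le_sum
    intro j _
    apply le_min
    · have h1 : min p (X j) ≤ p := min_le_left _ _
      have h2 : min q (X j) ≤ q := min_le_left _ _
      nlinarith [mul_le_mul_of_nonneg_left h1 ha, mul_le_mul_of_nonneg_left h2 hd]
    · have h1 : min p (X j) ≤ X j := min_le_right _ _
      have h2 : min q (X j) ≤ X j := min_le_right _ _
      have h3 : a * X j + d * X j = X j := by rw [← add_mul, had, one_mul]
      linarith [mul_le_mul_of_nonneg_left h1 ha, mul_le_mul_of_nonneg_left h2 hd]
  have hs : ∑ j ∈ univ.filter (fun j => j ≠ i), (a * min p (X j) + d * min q (X j)) =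
      a * ∑ j ∈ univ.filter (fun j => j ≠ i), min p (X j) +
      d * ∑ j ∈ univ.filter (fun j => j ≠ i), min q (X j) := by
    rw [Finset.sum_add_distrib, ← Finset.mul_sum, ← Finset.mul_sum]
  nlinarith [hsum, hs]

/-- Local equilibrium constraints suffice: if every agent's collection is a local maximizer
of its own payoff (holding the others fixed), then the profile is a pure Nash equilibrium. -/
theorem local_constraints_suffice (n : ℕ) (b : Fin n → ℝ → ℝ) (c : Fin n → ℝ)
    (hc : ∀ i, 0 < c i)
    (hbc : ∀ i, ContinuousOn (b i) (Set.Ici 0))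
    (hbm : ∀ i, MonotoneOn (b i) (Set.Ici 0))
    (hbconc : ∀ i, ConcaveOn ℝ (Set.Ici 0) (b i))
    (X : Fin n → ℝ) (hX : ∀ i, 0 ≤ X i)
    (hloc : ∀ i, ∃ ε > 0, ∀ y, 0 ≤ y → |y - X i| < ε →
      U b c (Function.update X i y) i ≤ U b c X i) :
    ∀ i, ∀ y, 0 ≤ y → U b c (Function.update X i y) i ≤ U b c X i := by
  intro i
  set T : ℝ → ℝ := fun y => y + ∑ j ∈ univ.filter (fun j => j ≠ i), min y (X j) with hT
  set f : ℝ → ℝ := fun y => b i (T y) - c i * y with hf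
  -- the utility after deviation equals f y
  have hkey : ∀ y : ℝ, U b c (Function.update X i y) i = f y := by
    intro y
    simp only [U, total, hf, hT]
    congr 2
    · congr 1
      · exact Function.update_self i y X
      · apply Finset.sum_congr rfl
        intro j hj
        rw [Finset.mem_filter] at hj
        rw [Function.update_self, Function.update_of_ne hj.2]
    · exact Function.update_self i y X
  have hXeq : U b c X i = f (X i) := by
    rw [← hkey (X i), Function.update_eq_self]
  -- T maps Ici 0 to Ici 0
  have hTmem : ∀ y ∈ Set.Ici (0:ℝ), T y ∈ Set.Ici (0:ℝ) := by
    intro y hy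
    have : (0:ℝ) ≤ ∑ j ∈ univ.filter (fun j => j ≠ i), min y (X j) :=
      Finset.sum_nonneg fun j _ => le_min hy (hX j)
    simp only [Set.mem_Ici] at hy ⊢
    simp only [hT]
    linarith
  have hTsub : T '' Set.Ici 0 ⊆ Set.Ici 0 := by
    rintro _ ⟨y, hy, rfl⟩; exact hTmem y hy
  -- concavity of f on Ici 0
  have hconcf : ConcaveOn ℝ (Set.Ici 0) f := by
    refine ⟨convex_Ici 0, ?_⟩
    intro p hp q hq a d ha hd had
    simp only [smul_eq_mul, hf]
    have hTp : T p ∈ Set.Ici (0:ℝ) := hTmem p hp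
    have hTq : T q ∈ Set.Ici (0:ℝ) := hTmem q hq
    have hmemc : a * p + d * q ∈ Set.Ici (0:ℝ) := by
      simpa using (convex_Ici (0:ℝ)) hp hq ha hd had
    have hTcomb : a * T p + d * T q ≤ T (a * p + d * q) := by
      simpa [smul_eq_mul] using (T_concave X i).2 hp hq ha hd had
    have hmid : a * T p + d * T q ∈ Set.Ici (0:ℝ) := by
      simpa using (convex_Ici (0:ℝ)) hTp hTq ha hd had
    have h1 : b i (a * T p + d * T q) ≤ b i (T (a * p + d * q)) :=
      hbm i hmid (hTmem _ hmemc) hTcomb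
    have h2 : a * b i (T p) + d * b i (T q) ≤ b i (a * T p + d * T q) := by
      simpa [smul_eq_mul] using (hbconc i).2 hTp hTq ha hd had
    nlinarith [h1, h2]
  have hloc' := hloc i
  obtain ⟨ε, hε, hεprop⟩ := hloc'
  intro y hy
  rw [hkey, hXeq]
  refine concave_local_max_global hconcf (hX i) hε ?_ y hy
  intro z hz hznear
  have := hεprop z hz hznear
  rwa [hkey, hXeq] at this
end

section
/- Positive spillovers in total-data coordinates: let X and X' be nonnegative collection profiles, and let i be an agent such that t_i(X) = t_i(X') and t_j(X) ≤ t_j(X') for every j ≠ i. Then X' i ≤ X i, and consequently U_i(X') ≥ U_i(X). -/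
open Finset

lemma total_eq_sum_min {n : ℕ} (X : Fin n → ℝ) (i : Fin n) :
    total X i = ∑ j, min (X i) (X j) := by
  have h1 : univ.filter (fun j => j ≠ i) = univ.erase i := by
    ext j; simp [Finset.mem_erase, and_comm]
  rw [total, h1, ← Finset.add_sum_erase univ (fun j => min (X i) (X j)) (mem_univ i),
    min_self]

lemma sum_min_mono {n : ℕ} (Y : Fin n → ℝ) {a b : ℝ} (hab : a ≤ b) :
    ∑ j, min a (Y j) ≤ ∑ j, min b (Y j) :=
  Finset.sum_le_sum fun j _ => min_le_min hab le_rfl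

lemma sum_min_gap {n : ℕ} (Y : Fin n → ℝ) {a b : ℝ} (k : Fin n)
    (hab : a ≤ b) (hbk : b ≤ Y k) :
    (∑ j, min a (Y j)) + (b - a) ≤ ∑ j, min b (Y j) := by
  rw [← Finset.add_sum_erase univ (fun j => min a (Y j)) (mem_univ k),
    ← Finset.add_sum_erase univ (fun j => min b (Y j)) (mem_univ k)]
  have h1 : min a (Y k) = a := min_eq_left (hab.trans hbk)
  have h2 : min b (Y k) = b := min_eq_left hbk
  have h3 : ∑ j ∈ univ.erase k, min a (Y j) ≤ ∑ j ∈ univ.erase k, min b (Y j) :=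
    Finset.sum_le_sum fun j _ => min_le_min hab le_rfl
  rw [h1, h2]; linarith

/-- Positive spillovers in total-data coordinates: if agent `i`'s total is unchanged while
every other agent's total weakly increases, then `i`'s own collection weakly decreases and
hence `i`'s utility weakly increases. -/
theorem positive_spillovers_total (n : ℕ) (b : Fin n → ℝ → ℝ) (c : Fin n → ℝ)
    (hc : ∀ i, 0 < c i)
    (hbc : ∀ i, ContinuousOn (b i) (Set.Ici 0))
    (hbm : ∀ i, MonotoneOn (b i) (Set.Ici 0))
    (hbconc : ∀ i, ConcaveOn ℝ (Set.Ici 0) (b i))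
    (X X' : Fin n → ℝ) (hX : ∀ j, 0 ≤ X j) (hX' : ∀ j, 0 ≤ X' j)
    (i : Fin n)
    (hi : total X i = total X' i)
    (hothers : ∀ j, j ≠ i → total X j ≤ total X' j) :
    X' i ≤ X i ∧ U b c X i ≤ U b c X' i := by
  classical
  have key : X' i ≤ X i := by
    by_contra hcon
    push_neg at hcon
    -- hcon : X i < X' i
    set G : ℝ → ℝ := fun s => ∑ j, min s (X j) with hG
    set G' : ℝ → ℝ := fun s => ∑ j, min s (X' j) with hG'
    have htot : ∀ j, total X j = G (X j) := by
      intro j; rw [total_eq_sum_min, hG]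
    have htot' : ∀ j, total X' j = G' (X' j) := by
      intro j; rw [total_eq_sum_min, hG']
    have hGmono : ∀ {a b : ℝ}, a ≤ b → G a ≤ G b := by
      intro a b hab; rw [hG]; exact sum_min_mono X hab
    have hG'mono : ∀ {a b : ℝ}, a ≤ b → G' a ≤ G' b := by
      intro a b hab; rw [hG']; exact sum_min_mono X' hab
    have hGcont : Continuous G := by
      rw [hG]; exact continuous_finset_sum _ fun j _ => continuous_id.min continuous_const
    have hG'cont : Continuous G' := by
      rw [hG']; exact continuous_finset_sum _ fun j _ => continuous_id.min continuous_const
    have hG0 : G 0 = 0 := by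
      rw [hG]; exact Finset.sum_eq_zero fun j _ => min_eq_left (hX j)
    have hG'0 : G' 0 = 0 := by
      rw [hG']; exact Finset.sum_eq_zero fun j _ => min_eq_left (hX' j)
    have hGG' : G (X i) = G' (X' i) := by rw [← htot i, ← htot' i, hi]
    set H : ℝ → ℝ := fun s => G s - G' s with hH
    have hHdef : ∀ s, H s = G s - G' s := fun s => by rw [hH]
    have hHXi : 0 < H (X i) := by
      have hgap : G' (X i) + (X' i - X i) ≤ G' (X' i) := by
        rw [hG']; exact sum_min_gap X' i hcon.le le_rfl
      have := hHdef (X i)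
      linarith [hGG', this]
    set S : Set ℝ := {s | s ∈ Set.Icc (0:ℝ) (X i) ∧ H s ≤ 0} with hSdef
    have hXi0 : 0 ≤ X i := hX i
    have h0S : (0:ℝ) ∈ S := by
      refine ⟨⟨le_rfl, hXi0⟩, ?_⟩
      rw [hHdef, hG0, hG'0]; linarith
    have hSsub : S ⊆ Set.Icc 0 (X i) := fun s hs => hs.1
    have hHcont : Continuous H := by
      rw [hH]; exact hGcont.sub hG'cont
    have hSclosed : IsClosed S := by
      have hrw : S = Set.Icc 0 (X i) ∩ H ⁻¹' (Set.Iic 0) := by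
        ext s; simp [hSdef, Set.mem_Icc, and_assoc]
      rw [hrw]
      exact isClosed_Icc.inter (isClosed_Iic.preimage hHcont)
    have hScomp : IsCompact S := isCompact_Icc.of_isClosed_subset hSclosed hSsub
    set s0 := sSup S with hs0def
    have hs0S : s0 ∈ S := hScomp.sSup_mem ⟨0, h0S⟩
    have hs0H : H s0 ≤ 0 := hs0S.2
    have hs0mem : s0 ∈ Set.Icc (0:ℝ) (X i) := hs0S.1
    have hs0lt : s0 < X i := by
      rcases lt_or_eq_of_le hs0mem.2 with h | h
      · exact h
      · rw [h] at hs0H; linarith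
    have hBdd : BddAbove S := hScomp.bddAbove
    have hHpos : ∀ s, s0 < s → s ≤ X i → 0 < H s := by
      intro s h1 h2
      by_contra h3
      push_neg at h3
      have hsS : s ∈ S := ⟨⟨hs0mem.1.trans h1.le, h2⟩, h3⟩
      exact absurd (le_csSup hBdd hsS) (not_le.mpr h1)
    -- Step 3: find j ≠ i with X' j ≤ s0 < X j
    have hexj : ∃ j, j ≠ i ∧ X' j ≤ s0 ∧ s0 < X j := by
      by_contra hno
      push_neg at hno
      -- hno : ∀ j, j ≠ i → X' j ≤ s0 → X j ≤ s0
      have hall : ∀ j, s0 < X j → s0 < X' j := by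
        intro j hj
        by_cases hji : j = i
        · subst hji; exact hs0lt.trans hcon
        · by_contra h4
          push_neg at h4
          exact absurd hj (not_lt.mpr (hno j hji h4))
      set T := univ.filter (fun j => s0 < X j) with hT
      have hiT : i ∈ T := by simp [hT, hs0lt]
      have hTne : T.Nonempty := ⟨i, hiT⟩
      set δ : ℝ := min (T.inf' hTne (fun j => X' j - s0)) (X i - s0) with hδ
      have hδpos : 0 < δ := by
        rw [hδ]
        apply lt_min
        · rw [Finset.lt_inf'_iff]
          intro j hj
          have hjX : s0 < X j := by
            rw [hT] at hj
            exact (Finset.mem_filter.mp hj).2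
          have := hall j hjX
          linarith
        · linarith
      have hδle : ∀ j ∈ T, δ ≤ X' j - s0 := by
        intro j hj
        calc δ ≤ T.inf' hTne (fun j => X' j - s0) := by rw [hδ]; exact min_le_left _ _
          _ ≤ X' j - s0 := Finset.inf'_le _ hj
      have hδle2 : δ ≤ X i - s0 := by rw [hδ]; exact min_le_right _ _
      have hkey : H (s0 + δ) ≤ H s0 := by
        have hmain : G (s0 + δ) - G s0 ≤ G' (s0 + δ) - G' s0 := by
          rw [hG, hG']
          rw [← Finset.sum_sub_distrib, ← Finset.sum_sub_distrib]
          apply Finset.sum_le_sum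
          intro j _
          by_cases hj : s0 < X j
          · have hjT : j ∈ T := by simp [hT, hj]
            have h5 : s0 + δ ≤ X' j := by have := hδle j hjT; linarith
            have h6 : min (s0 + δ) (X' j) = s0 + δ := min_eq_left h5
            have h7 : min s0 (X' j) = s0 := min_eq_left (by linarith)
            have h8 : min (s0 + δ) (X j) ≤ s0 + δ := min_le_left _ _
            have h9 : s0 ≤ min s0 (X j) := le_min le_rfl hj.le
            rw [h6, h7]; linarith
          · push_neg at hj
            have h6 : min (s0 + δ) (X j) = X j := min_eq_right (by linarith)
            have h7 : min s0 (X j) = X j := min_eq_right hj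
            have h8 : min s0 (X' j) ≤ min (s0 + δ) (X' j) := min_le_min (by linarith) le_rfl
            rw [h6, h7]; linarith
        rw [hHdef, hHdef]; linarith
      have h10 : 0 < H (s0 + δ) := hHpos _ (by linarith) (by linarith)
      linarith
    obtain ⟨j, hji, hj1, hj2⟩ := hexj
    set m := min (X j - s0) (X i - s0) with hm
    have hm1 : m ≤ X j - s0 := by rw [hm]; exact min_le_left _ _
    have hm2 : m ≤ X i - s0 := by rw [hm]; exact min_le_right _ _
    have hmpos : 0 < m := by rw [hm]; exact lt_min (by linarith) (by linarith)
    set s1 := s0 + m / 2 with hs1def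
    have hs1a : s0 < s1 := by rw [hs1def]; linarith
    have hs1b : s1 < X j := by rw [hs1def]; linarith
    have hs1c : s1 ≤ X i := by rw [hs1def]; linarith
    have hposH : 0 < H s1 := hHpos s1 hs1a hs1c
    have hA : G' (X' j) ≤ G' s1 := hG'mono (hj1.trans hs1a.le)
    have hB : G s1 + (X j - s1) ≤ G (X j) := by
      rw [hG]; exact sum_min_gap X j hs1b.le le_rfl
    have hC := hothers j hji
    rw [htot j, htot' j] at hC
    rw [hHdef] at hposH
    linarith
  refine ⟨key, ?_⟩
  unfold U
  rw [hi]
  have hmul : c i * X' i ≤ c i * X i := mul_le_mul_of_nonneg_left key (hc i).le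
  linarith
end

section
/- Supermodularity of fair exchange in total-data coordinates: fix an agent i, and let A, B, C, D be nonnegative collection profiles whose total-data vectors satisfy: t_j(A) = t_j(B) and t_j(C) = t_j(D) for all j ≠ i; t_j(A) ≤ t_j(C) for all j ≠ i; t_i(A) = t_i(C), t_i(B) = t_i(D), and t_i(A) ≤ t_i(B). Then the own collections satisfy the decreasing-differences inequality D i − C i ≤ B i − A i, and consequently agent i's utility has increasing differences: U_i(D) − U_i(C) ≥ U_i(B) − U_i(A). -/
open Finset

open MeasureTheory

/-!
Own collection is an explicit function of the totals vector: as agent `i`'s total passes the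
level `σ`, one more unit of own collection adds a unit of total for `i` and for every agent
whose total is at least `σ`, so
`X i = ∫ σ in 0..t i, (n - #{j | t j < σ})⁻¹`.
When the other agents' totals are fixed, the increment `B i - A i` is the integral of this
rate between the two own totals; raising the others' totals only shrinks the set
`{j ≠ i | t j < σ}`, hence the rate, which gives decreasing differences. The utility
statement follows because the benefit terms cancel.
-/

variable {n : ℕ}

/-- The total data accessed by an agent collecting `s` against the profile `X`. -/
noncomputable def totalAt (X : Fin n → ℝ) (s : ℝ) : ℝ :=
  ∑ j, min s (X j)

lemma total_eq_totalAt (X : Fin n → ℝ) (i : Fin n) : total X i = totalAt X (X i) := by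
  rw [total, totalAt, filter_ne', ← add_sum_erase univ _ (mem_univ i), min_self]

lemma totalAt_mono (X : Fin n → ℝ) : Monotone (totalAt X) :=
  fun _ _ h => sum_le_sum fun _ _ => min_le_min h le_rfl

lemma totalAt_zero {X : Fin n → ℝ} (hX : ∀ j, 0 ≤ X j) : totalAt X 0 = 0 := by
  simp [totalAt, hX]

lemma total_nonneg {X : Fin n → ℝ} (hX : ∀ j, 0 ≤ X j) (i : Fin n) : 0 ≤ total X i := by
  rw [total_eq_totalAt, ← totalAt_zero hX]
  exact totalAt_mono X (hX i)

lemma total_lt_total_iff (X : Fin n → ℝ) {j k : Fin n} :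
    total X j < total X k ↔ X j < X k := by
  rw [total_eq_totalAt, total_eq_totalAt]
  refine ⟨fun h => lt_of_not_ge fun hkj => h.not_ge (totalAt_mono X hkj), fun h => ?_⟩
  refine sum_lt_sum (fun _ _ => min_le_min h.le le_rfl) ⟨k, mem_univ k, ?_⟩
  simpa using h

lemma totalAt_sub_totalAt {X : Fin n → ℝ} {a s : ℝ} (has : a ≤ s)
    (hgap : ∀ j, X j < s → X j ≤ a) :
    totalAt X s - totalAt X a = (n - #{j | X j < s}) * (s - a) := by
  have hterm : ∀ j, min s (X j) - min a (X j) = if X j < s then 0 else s - a := by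
    intro j
    split_ifs with h
    · rw [min_eq_right h.le, min_eq_right (hgap j h), sub_self]
    · rw [min_eq_left (not_lt.1 h), min_eq_left (has.trans (not_lt.1 h))]
  have hcard : (#{j | ¬X j < s} : ℝ) = n - #{j | X j < s} := by
    have := card_filter_add_card_filter_not (s := univ) (fun j => X j < s)
    rw [card_univ, Fintype.card_fin] at this
    rw [eq_sub_iff_add_eq, add_comm]
    exact_mod_cast this
  rw [totalAt, totalAt, ← sum_sub_distrib, sum_congr rfl fun j _ => hterm j, sum_ite,
    sum_const_zero, zero_add, sum_const, nsmul_eq_mul, hcard]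

/-- The rate of own collection per unit of total at the total level `σ`, counting as
"below `σ`" only the agents of `s`. At `#{j ∈ s | t j < σ} = n` it is the junk value
`0⁻¹ = 0`. -/
noncomputable def rate (s : Finset (Fin n)) (t : Fin n → ℝ) (σ : ℝ) : ℝ :=
  ((n : ℝ) - #{j ∈ s | t j < σ})⁻¹

lemma measurable_rate (s : Finset (Fin n)) (t : Fin n → ℝ) : Measurable (rate s t) := by
  have hmono : Monotone fun σ => #{j ∈ s | t j < σ} :=
    fun _ _ h => card_le_card fun j hj => by
      rw [mem_filter] at hj ⊢
      exact ⟨hj.1, hj.2.trans_le h⟩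
  exact (measurable_from_nat (f := fun k : ℕ => ((n : ℝ) - k)⁻¹)).comp hmono.measurable

lemma rate_mem_Icc (s : Finset (Fin n)) (t : Fin n → ℝ) (σ : ℝ) :
    rate s t σ ∈ Set.Icc 0 1 := by
  have hk : #{j ∈ s | t j < σ} ≤ n := (card_le_univ _).trans (Fintype.card_fin n).le
  rw [rate, ← Nat.cast_sub hk]
  rcases Nat.eq_zero_or_pos (n - #{j ∈ s | t j < σ}) with h | h
  · simp [h]
  · exact ⟨by positivity, inv_le_one_of_one_le₀ (by exact_mod_cast h)⟩

lemma intervalIntegrable_rate (s : Finset (Fin n)) (t : Fin n → ℝ) (a b : ℝ) :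
    IntervalIntegrable (rate s t) volume a b := by
  refine (intervalIntegrable_const (c := (1 : ℝ))).mono_fun
    (measurable_rate s t).aestronglyMeasurable (Filter.Eventually.of_forall fun σ => ?_)
  obtain ⟨h0, h1⟩ := rate_mem_Icc s t σ
  simpa [abs_of_nonneg h0] using h1

lemma rate_anti {s : Finset (Fin n)} {t t' : Fin n → ℝ} (hs : #s < n)
    (h : ∀ j ∈ s, t j ≤ t' j) (σ : ℝ) : rate s t' σ ≤ rate s t σ := by
  have hsub : {j ∈ s | t' j < σ} ⊆ {j ∈ s | t j < σ} := by
    intro j hj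
    rw [mem_filter] at hj ⊢
    exact ⟨hj.1, (h j hj.1).trans_lt hj.2⟩
  have hpos : (0 : ℝ) < n - #{j ∈ s | t j < σ} := by
    have : #{j ∈ s | t j < σ} < n := (card_filter_le _ _).trans_lt hs
    exact sub_pos.2 (by exact_mod_cast this)
  exact inv_anti₀ hpos (sub_le_sub_left (by exact_mod_cast card_le_card hsub) _)

lemma rate_erase_congr {t t' : Fin n → ℝ} {i : Fin n} (h : ∀ j, j ≠ i → t j = t' j) :
    rate (univ.erase i) t = rate (univ.erase i) t' := by
  funext σ
  rw [rate, rate, filter_congr fun j hj => by rw [h j (ne_of_mem_erase hj)]]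

lemma rate_univ_eq_rate_erase {t : Fin n → ℝ} {i : Fin n} {σ : ℝ} (hσ : σ ≤ t i) :
    rate univ t σ = rate (univ.erase i) t σ := by
  rw [rate, rate, filter_erase, erase_eq_of_notMem]
  simpa using hσ

lemma filter_total_lt_eq {X : Fin n → ℝ} {i : Fin n} {σ : ℝ} (hσ : σ ≤ total X i)
    (hbelow : ∀ j, X j < X i → total X j < σ) :
    univ.filter (fun j => total X j < σ) = univ.filter fun j => X j < X i := by
  ext j
  simp only [mem_filter, mem_univ, true_and]
  exact ⟨fun h => (total_lt_total_iff X).1 (h.trans_le hσ), hbelow j⟩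

/-- The rate is constant on `(totalAt X a, total X i]`. -/
lemma integral_rate_totalAt {X : Fin n → ℝ} {i : Fin n} {a : ℝ} (hai : a ≤ X i)
    (hgap : ∀ j, X j < X i → X j ≤ a) :
    ∫ σ in totalAt X a..total X i, rate univ (total X) σ = X i - a := by
  have hcard : #{j | X j < X i} < n := by
    have hi : (univ.filter fun j => X j < X i) ⊂ univ :=
      filter_ssubset.2 ⟨i, mem_univ i, lt_irrefl _⟩
    simpa using card_lt_card hi
  have hpos : (0 : ℝ) < n - #{j | X j < X i} := sub_pos.2 (by exact_mod_cast hcard)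
  have hle : totalAt X a ≤ total X i := total_eq_totalAt X i ▸ totalAt_mono X hai
  have hconst : ∀ σ ∈ Set.uIoc (totalAt X a) (total X i),
      rate univ (total X) σ = ((n : ℝ) - #{j | X j < X i})⁻¹ := by
    intro σ hσ
    rw [Set.uIoc_of_le hle] at hσ
    rw [rate, filter_total_lt_eq hσ.2 fun j hj => ?_]
    rw [total_eq_totalAt]
    exact (totalAt_mono X (hgap j hj)).trans_lt hσ.1
  rw [intervalIntegral.integral_congr_ae (Filter.Eventually.of_forall hconst),
    intervalIntegral.integral_const, smul_eq_mul, total_eq_totalAt,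
    totalAt_sub_totalAt hai hgap]
  field_simp

theorem self_eq_integral_rate {X : Fin n → ℝ} (hX : ∀ j, 0 ≤ X j) (i : Fin n) :
    X i = ∫ σ in 0..total X i, rate univ (total X) σ := by
  have wf : WellFounded fun j k : Fin n => X j < X k :=
    @Finite.wellFounded_of_trans_of_irrefl _ _ _ ⟨fun _ _ _ => lt_trans⟩
      ⟨fun _ => lt_irrefl _⟩
  induction i using wf.induction with
  | _ i ih =>
  -- `a` is the largest collection below `X i`, or `0` if there is none
  obtain ⟨a, hai, hgap, ha⟩ : ∃ a, a ≤ X i ∧ (∀ j, X j < X i → X j ≤ a) ∧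
      a = ∫ σ in 0..totalAt X a, rate univ (total X) σ := by
    by_cases hS : ({j | X j < X i} : Finset (Fin n)).Nonempty
    · obtain ⟨j, hj, hmax⟩ := exists_max_image _ X hS
      simp only [mem_filter, mem_univ, true_and] at hj hmax
      exact ⟨X j, hj.le, hmax, total_eq_totalAt X j ▸ ih j hj⟩
    · refine ⟨0, hX i, fun j hj => (hS ⟨j, by simpa using hj⟩).elim, ?_⟩
      simp [totalAt_zero hX]
  rw [← intervalIntegral.integral_add_adjacent_intervals (intervalIntegrable_rate _ _ _ _)
    (intervalIntegrable_rate _ _ _ _), ← ha, integral_rate_totalAt hai hgap]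
  ring

theorem self_eq_integral_rate_erase {X : Fin n → ℝ} (hX : ∀ j, 0 ≤ X j) (i : Fin n) :
    X i = ∫ σ in 0..total X i, rate (univ.erase i) (total X) σ := by
  refine (self_eq_integral_rate hX i).trans (intervalIntegral.integral_congr fun σ hσ => ?_)
  rw [Set.uIcc_of_le (total_nonneg hX i)] at hσ
  exact rate_univ_eq_rate_erase hσ.2

theorem sub_eq_integral_rate {X Y : Fin n → ℝ} (hX : ∀ j, 0 ≤ X j) (hY : ∀ j, 0 ≤ Y j)
    {i : Fin n} (hXY : ∀ j, j ≠ i → total X j = total Y j) :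
    Y i - X i = ∫ σ in total X i..total Y i, rate (univ.erase i) (total X) σ := by
  rw [self_eq_integral_rate_erase hX i, self_eq_integral_rate_erase hY i,
    rate_erase_congr fun j hj => (hXY j hj).symm,
    intervalIntegral.integral_interval_sub_left (intervalIntegrable_rate _ _ _ _)
      (intervalIntegrable_rate _ _ _ _)]

theorem supermodular_total_coordinates_general (n : ℕ) (b : Fin n → ℝ → ℝ) (c : Fin n → ℝ)
    (hc : ∀ i, 0 < c i)
    (i : Fin n)
    (A B C D : Fin n → ℝ)
    (hA : ∀ j, 0 ≤ A j) (hB : ∀ j, 0 ≤ B j) (hC : ∀ j, 0 ≤ C j) (hD : ∀ j, 0 ≤ D j)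
    (hAB : ∀ j, j ≠ i → total A j = total B j)
    (hCD : ∀ j, j ≠ i → total C j = total D j)
    (hAC : ∀ j, j ≠ i → total A j ≤ total C j)
    (hiAC : total A i = total C i)
    (hiBD : total B i = total D i)
    (hiAB : total A i ≤ total B i) :
    D i - C i ≤ B i - A i ∧
      U b c B i - U b c A i ≤ U b c D i - U b c C i := by
  have hcard : #(univ.erase i) < n := by
    simpa using card_erase_lt_of_mem (mem_univ i)
  have hdiff : D i - C i ≤ B i - A i := by
    rw [sub_eq_integral_rate hC hD hCD, sub_eq_integral_rate hA hB hAB, ← hiAC, ← hiBD]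
    exact intervalIntegral.integral_mono_on hiAB (intervalIntegrable_rate _ _ _ _)
      (intervalIntegrable_rate _ _ _ _)
      fun σ _ => rate_anti hcard (fun j hj => hAC j (ne_of_mem_erase hj)) σ
  refine ⟨hdiff, ?_⟩
  rw [U, U, U, U, ← hiAC, ← hiBD]
  linarith [mul_le_mul_of_nonneg_left hdiff (hc i).le]

/-- Supermodularity of fair exchange in total-data coordinates: the own collection has
decreasing differences in (own total, others' totals), and consequently utility has
increasing differences. -/
theorem supermodular_total_coordinates (n : ℕ) (b : Fin n → ℝ → ℝ) (c : Fin n → ℝ)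
    (hc : ∀ i, 0 < c i)
    (hbc : ∀ i, ContinuousOn (b i) (Set.Ici 0))
    (hbm : ∀ i, MonotoneOn (b i) (Set.Ici 0))
    (hbconc : ∀ i, ConcaveOn ℝ (Set.Ici 0) (b i))
    (i : Fin n)
    (A B C D : Fin n → ℝ)
    (hA : ∀ j, 0 ≤ A j) (hB : ∀ j, 0 ≤ B j) (hC : ∀ j, 0 ≤ C j) (hD : ∀ j, 0 ≤ D j)
    (hAB : ∀ j, j ≠ i → total A j = total B j)
    (hCD : ∀ j, j ≠ i → total C j = total D j)
    (hAC : ∀ j, j ≠ i → total A j ≤ total C j)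
    (hiAC : total A i = total C i)
    (hiBD : total B i = total D i)
    (hiAB : total A i ≤ total B i) :
    D i - C i ≤ B i - A i ∧
      U b c B i - U b c A i ≤ U b c D i - U b c C i :=
  supermodular_total_coordinates_general n b c hc i A B C D hA hB hC hD hAB hCD hAC hiAC hiBD hiAB
end

section
/- Totals bound for upward moves with lower agents fixed: let X and X' be nonnegative collection profiles and i an agent with X' i > X i, such that X' j = X j for every agent j ≠ i with X j ≤ X i. Then t_i(X') ≤ t_i(X) + k_i^↑(X) · (X' i − X i), where k_i^↑(X) = 1 + #{j ≠ i : X j > X i}. -/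
open Finset

/-- `k_i^↑(X)`: the number of agents strictly above `i`, plus `i` itself. -/
noncomputable def kUp {n : ℕ} (X : Fin n → ℝ) (i : Fin n) : ℕ :=
  1 + (univ.filter (fun j => j ≠ i ∧ X i < X j)).card

/-- Totals bound for upward moves with lower agents fixed: if agent `i` raises its
collection while all agents weakly below `i` keep their collections, then `i`'s total
accessible data increases by at most `k_i^↑(X)` times the increase in `i`'s collection. -/
theorem upward_totals_bound (n : ℕ) (X X' : Fin n → ℝ)
    (hX : ∀ j, 0 ≤ X j) (hX' : ∀ j, 0 ≤ X' j)
    (i : Fin n) (hi : X i < X' i)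
    (hfix : ∀ j, j ≠ i → X j ≤ X i → X' j = X j) :
    total X' i ≤ total X i + (kUp X i : ℝ) * (X' i - X i) := by
  have hd : (0:ℝ) ≤ X' i - X i := by linarith
  have key : ∀ j ∈ univ.filter (fun j => j ≠ i),
      min (X' i) (X' j) ≤ min (X i) (X j)
        + (if X i < X j then X' i - X i else 0) := by
    intro j hj
    simp only [mem_filter] at hj
    by_cases h : X i < X j
    · have h1 : min (X i) (X j) = X i := min_eq_left h.le
      have h2 : min (X' i) (X' j) ≤ X' i := min_le_left _ _
      simp only [if_pos h]
      linarith
    · have hle : X j ≤ X i := not_lt.mp h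
      have hfx := hfix j hj.2 hle
      have h1 : min (X i) (X j) = X j := min_eq_right hle
      have h2 : min (X' i) (X' j) = X j := by
        rw [hfx]; exact min_eq_right (hle.trans hi.le)
      simp only [if_neg h]
      linarith
  have hsum : ∑ j ∈ univ.filter (fun j => j ≠ i), min (X' i) (X' j)
      ≤ ∑ j ∈ univ.filter (fun j => j ≠ i),
          (min (X i) (X j) + (if X i < X j then X' i - X i else 0)) :=
    Finset.sum_le_sum key
  have hite : ∑ j ∈ univ.filter (fun j => j ≠ i),
      (if X i < X j then X' i - X i else 0)
      = ((univ.filter (fun j => j ≠ i ∧ X i < X j)).card : ℝ) * (X' i - X i) := by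
    rw [← Finset.sum_filter, Finset.filter_filter, Finset.sum_const, nsmul_eq_mul]
  rw [Finset.sum_add_distrib, hite] at hsum
  unfold total kUp
  push_cast
  linarith
end

section
/- Outside-option closure: let b : ℝ → ℝ be continuous, nondecreasing, and concave on [0, ∞), satisfying the vanishing-marginal-value condition, and let c > 0. Define v(t) = sup_{z ≥ 0} (b(t + z) − c·z) for t ≥ 0. Then for every t ≥ 0 the supremum is finite and attained by some z ≥ 0, and v is concave and nondecreasing on [0, ∞). -/
/-!
Once the unit increments of `b` drop below `c / 2`, concavity caps `b` from there on by a line of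
slope `c / 2`, so the objective `z ↦ b (t + z) - c z` tends to `-∞` and, being continuous,
attains its maximum on `[0, ∞)`. With maximisers available, `v` is the partial maximum of the
jointly concave function `(t, z) ↦ b (t + z) - c z`, hence concave, and `v t₁ ≤ v t₂` for
`t₁ ≤ t₂` by evaluating the objective of `t₂` at a maximiser for `t₁`.
-/

open Set Filter Topology

/-- The outside-option value: `v t = sup_{z ≥ 0} (b (t + z) - c * z)`. -/
noncomputable def outsideOption (b : ℝ → ℝ) (c : ℝ) (t : ℝ) : ℝ :=
  sSup ((fun z => b (t + z) - c * z) '' Set.Ici 0)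

theorem ConcaveOn.le_add_mul_slope {s : Set ℝ} {f : ℝ → ℝ} (hf : ConcaveOn ℝ s f) {x y z : ℝ}
    (hx : x ∈ s) (hz : z ∈ s) (hxy : x < y) (hyz : y ≤ z) :
    f z ≤ f y + (z - y) * ((f y - f x) / (y - x)) := by
  rcases hyz.eq_or_lt with rfl | hyz
  · simp
  have hslope := hf.slope_anti_adjacent hx hz hxy hyz
  rw [div_le_iff₀ (sub_pos.2 hyz)] at hslope
  linarith

theorem ConcaveOn.tendsto_sub_mul_atBot {f : ℝ → ℝ} {c : ℝ} (hc : 0 < c)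
    (hf : ConcaveOn ℝ (Ici 0) f) (hvanish : Tendsto (fun t => f (t + 1) - f t) atTop (𝓝 0)) :
    Tendsto (fun y => f y - c * y) atTop atBot := by
  obtain ⟨M, hM, hstep⟩ :=
    ((eventually_ge_atTop 0).and (hvanish.eventually_le_const (half_pos hc))).exists
  have hline : Tendsto (fun y => f M - c / 2 * M + -(c / 2) * y) atTop atBot :=
    tendsto_atBot_add_const_left _ _ (tendsto_id.const_mul_atTop_of_neg (by linarith))
  refine tendsto_atBot_mono' atTop ((eventually_ge_atTop (M + 1)).mono fun y hy => ?_) hline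
  have hsecant := hf.le_add_mul_slope (mem_Ici.2 hM) (mem_Ici.2 (by linarith)) (lt_add_one M) hy
  rw [add_sub_cancel_left, div_one] at hsecant
  have := mul_le_mul_of_nonneg_left hstep (sub_nonneg.2 hy)
  linarith

theorem ContinuousOn.exists_isMaxOn_Ici {f : ℝ → ℝ} {a : ℝ} (hf : ContinuousOn f (Ici a))
    (htop : Tendsto f atTop atBot) : ∃ z ∈ Ici a, IsMaxOn f (Ici a) z := by
  refine hf.exists_isMaxOn' isClosed_Ici self_mem_Ici ?_
  rw [cocompact_eq_atBot_atTop, inf_sup_right, eventually_sup, eventually_inf_principal,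
    eventually_inf_principal]
  exact ⟨(eventually_lt_atBot a).mono fun x hx hxa => absurd hxa (not_le.2 hx),
    (htop.eventually_le_atBot (f a)).mono fun x hx _ => hx⟩

section OutsideOption

variable {b : ℝ → ℝ} {c : ℝ}

theorem exists_isMaxOn_outsideOption (hc : 0 < c) (hbc : ContinuousOn b (Ici 0))
    (hbconc : ConcaveOn ℝ (Ici 0) b)
    (hvanish : Tendsto (fun t => b (t + 1) - b t) atTop (𝓝 0)) {t : ℝ} (ht : t ∈ Ici 0) :
    ∃ z ∈ Ici 0, IsMaxOn (fun z => b (t + z) - c * z) (Ici 0) z := by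
  have hcont : ContinuousOn (fun z => b (t + z) - c * z) (Ici 0) :=
    (hbc.comp (by fun_prop) fun z hz => mem_Ici.2 (add_nonneg ht hz)).sub (by fun_prop)
  have hdecay : Tendsto (fun z => b (t + z) - c * z) atTop atBot := by
    refine (tendsto_atBot_add_const_right _ (c * t) ((hbconc.tendsto_sub_mul_atBot hc
      hvanish).comp (tendsto_atTop_add_const_left _ t tendsto_id))).congr fun z => ?_
    simp only [Function.comp_apply, id]
    ring
  exact hcont.exists_isMaxOn_Ici hdecay

theorem outsideOption_eq_of_isMaxOn {t z : ℝ} (hz : z ∈ Ici 0)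
    (hmax : IsMaxOn (fun z => b (t + z) - c * z) (Ici 0) z) :
    outsideOption b c t = b (t + z) - c * z :=
  IsGreatest.csSup_eq ⟨mem_image_of_mem _ hz, forall_mem_image.2 hmax⟩

theorem le_outsideOption_of_isMaxOn {t z z' : ℝ} (hz : z ∈ Ici 0)
    (hmax : IsMaxOn (fun z => b (t + z) - c * z) (Ici 0) z) (hz' : z' ∈ Ici 0) :
    b (t + z') - c * z' ≤ outsideOption b c t :=
  (outsideOption_eq_of_isMaxOn hz hmax).symm ▸ hmax hz'

variable (hmax : ∀ t ∈ Ici (0 : ℝ), ∃ z ∈ Ici 0, IsMaxOn (fun z => b (t + z) - c * z) (Ici 0) z)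
include hmax

theorem concaveOn_outsideOption (hb : ConcaveOn ℝ (Ici 0) b) :
    ConcaveOn ℝ (Ici 0) (outsideOption b c) := by
  refine ⟨convex_Ici 0, fun x hx y hy μ ν hμ hν hμν => ?_⟩
  obtain ⟨zx, hzx, hmx⟩ := hmax x hx
  obtain ⟨zy, hzy, hmy⟩ := hmax y hy
  obtain ⟨zw, hzw, hmw⟩ := hmax _ (convex_Ici 0 hx hy hμ hν hμν)
  have hb_mix :=
    hb.2 (mem_Ici.2 (add_nonneg hx hzx)) (mem_Ici.2 (add_nonneg hy hzy)) hμ hν hμν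
  have hz_mix : μ * zx + ν * zy ∈ Ici (0 : ℝ) :=
    add_nonneg (mul_nonneg hμ hzx) (mul_nonneg hν hzy)
  have hle := le_outsideOption_of_isMaxOn hzw hmw hz_mix
  rw [outsideOption_eq_of_isMaxOn hzx hmx, outsideOption_eq_of_isMaxOn hzy hmy]
  simp only [smul_eq_mul] at hb_mix hle ⊢
  rw [show μ * (x + zx) + ν * (y + zy) = μ * x + ν * y + (μ * zx + ν * zy) by ring] at hb_mix
  linarith

theorem monotoneOn_outsideOption (hb : MonotoneOn b (Ici 0)) :
    MonotoneOn (outsideOption b c) (Ici 0) := by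
  intro t₁ ht₁ t₂ ht₂ ht
  obtain ⟨z₁, hz₁, hm₁⟩ := hmax t₁ ht₁
  obtain ⟨z₂, hz₂, hm₂⟩ := hmax t₂ ht₂
  rw [outsideOption_eq_of_isMaxOn hz₁ hm₁]
  calc b (t₁ + z₁) - c * z₁ ≤ b (t₂ + z₁) - c * z₁ := by
        gcongr
        exact hb (mem_Ici.2 (add_nonneg ht₁ hz₁)) (mem_Ici.2 (add_nonneg ht₂ hz₁)) (by linarith)
    _ ≤ outsideOption b c t₂ := le_outsideOption_of_isMaxOn hz₂ hm₂ hz₁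

end OutsideOption

/-- Outside-option closure: for a continuous, nondecreasing, concave benefit function with
vanishing marginal value and positive per-unit cost, the outside-option supremum is attained
for every `t ≥ 0`, and the resulting value function `v` is concave and nondecreasing on
`[0, ∞)`. -/
theorem outside_option_closure (b : ℝ → ℝ) (c : ℝ) (hc : 0 < c)
    (hbc : ContinuousOn b (Set.Ici 0))
    (hbm : MonotoneOn b (Set.Ici 0))
    (hbconc : ConcaveOn ℝ (Set.Ici 0) b)
    (hvanish : Filter.Tendsto (fun t : ℝ => b (t + 1) - b t) Filter.atTop (nhds 0)) :
    (∀ t, 0 ≤ t → ∃ z, 0 ≤ z ∧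
        outsideOption b c t = b (t + z) - c * z ∧
        ∀ z', 0 ≤ z' → b (t + z') - c * z' ≤ b (t + z) - c * z) ∧
      ConcaveOn ℝ (Set.Ici 0) (outsideOption b c) ∧
      MonotoneOn (outsideOption b c) (Set.Ici 0) := by
  have hmax := fun t (ht : t ∈ Ici (0 : ℝ)) =>
    exists_isMaxOn_outsideOption (c := c) hc hbc hbconc hvanish ht
  refine ⟨fun t ht => ?_, concaveOn_outsideOption hmax hbconc, monotoneOn_outsideOption hmax hbm⟩
  obtain ⟨z, hz, hzmax⟩ := hmax t ht
  exact ⟨z, hz, outsideOption_eq_of_isMaxOn hz hzmax, fun z' hz' => hzmax hz'⟩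
end

section
/- Graph-restricted fair exchange admits a globally Pareto-undominated pure Nash equilibrium: let G be a simple undirected graph on the n agents, and suppose every agent's benefit function b_i is continuous, nondecreasing, and concave on [0, ∞) with the vanishing-marginal-value condition, and every cost c_i is positive. Then there exists a nonnegative collection profile X* that is a pure Nash equilibrium of the graph-restricted game and such that no nonnegative profile X' satisfies U_i^G(X') ≥ U_i^G(X*) for all agents i and U_j^G(X') > U_j^G(X*) for some agent j. -/
open Finset

/-- Agent `i`'s total accessible data under graph-restricted fair exchange. -/
noncomputable def totalG {n : ℕ} (G : SimpleGraph (Fin n)) [DecidableRel G.Adj]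
    (X : Fin n → ℝ) (i : Fin n) : ℝ :=
  X i + ∑ j ∈ G.neighborFinset i, min (X i) (X j)

/-- Agent `i`'s utility in the graph-restricted game. -/
noncomputable def UG {n : ℕ} (G : SimpleGraph (Fin n)) [DecidableRel G.Adj]
    (b : Fin n → ℝ → ℝ) (c : Fin n → ℝ) (X : Fin n → ℝ) (i : Fin n) : ℝ :=
  b i (totalG G X i) - c i * X i

/-- `X` is a (nonnegative) pure Nash equilibrium of the graph-restricted game. -/
def IsNEG {n : ℕ} (G : SimpleGraph (Fin n)) [DecidableRel G.Adj]
    (b : Fin n → ℝ → ℝ) (c : Fin n → ℝ) (X : Fin n → ℝ) : Prop :=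
  (∀ i, 0 ≤ X i) ∧
    ∀ i, ∀ y, 0 ≤ y → UG G b c (Function.update X i y) i ≤ UG G b c X i

/-!
Agents are frozen one at a time. An unfrozen agent `i` is evaluated against the concave surrogate
utility in which frozen neighbours keep their frozen amounts and unfrozen neighbours are assumed to
match whatever `i` collects; the agent whose greatest surrogate maximizer is smallest is frozen at
it. By concavity the greatest maximizers of the others never fall below an already frozen amount,
so amounts are frozen in nondecreasing order. Hence in the final profile `Z` each agent's true
utility equals its surrogate, while the utility of any profile that does not exceed `Z` on the
earlier agents is bounded by the surrogate: `Z` is an equilibrium. If `X` weakly Pareto-dominates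
`Z`, induction along the freezing order makes each `X i` a surrogate maximizer, so `X i ≤ Z i`,
and then no agent can be strictly better off under `X`. Vanishing marginal value makes the
surrogates tend to `-∞`, which gives the greatest maximizers.
-/
open Filter Topology

def IsGreatestMaximizerOn (f : ℝ → ℝ) (s : Set ℝ) (x : ℝ) : Prop :=
  IsGreatest {y ∈ s | IsMaxOn f s y} x

namespace IsGreatestMaximizerOn

variable {f g : ℝ → ℝ} {s : Set ℝ} {x y : ℝ}

lemma le_of_apply_le (h : IsGreatestMaximizerOn f s x) (hy : y ∈ s) (hxy : f x ≤ f y) :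
    y ≤ x :=
  h.2 ⟨hy, fun _ hz => (h.1.2 hz).trans hxy⟩

lemma le_of_eqOn_Icc (hf : ConcaveOn ℝ (Set.Ici 0) f)
    (hfx : IsGreatestMaximizerOn f (Set.Ici 0) x) (hy : 0 ≤ y) (hyx : y ≤ x)
    (hfg : Set.EqOn f g (Set.Icc 0 y)) {t : ℝ}
    (hgt : IsGreatestMaximizerOn g (Set.Ici 0) t) : y ≤ t := by
  by_contra! hty
  have ht : (0 : ℝ) ≤ t := hgt.1.1
  have hfty : f t ≤ f y := by
    have hmin := hf.ge_on_segment ht (hy.trans hyx) (Icc_subset_segment ⟨hty.le, hyx⟩)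
    rwa [min_eq_left (hfx.1.2 ht)] at hmin
  have hgty : g t ≤ g y := by rwa [← hfg ⟨ht, hty.le⟩, ← hfg ⟨hy, le_rfl⟩]
  exact hty.not_ge (hgt.le_of_apply_le hy hgty)

lemma exists_of_tendsto_atBot (hf : ContinuousOn f (Set.Ici 0)) (hlim : Tendsto f atTop atBot) :
    ∃ x, IsGreatestMaximizerOn f (Set.Ici 0) x := by
  obtain ⟨R, hR⟩ := (hlim.eventually_lt_atBot (f 0)).exists_forall_of_atTop
  set K := Set.Icc (0 : ℝ) (max R 0)
  have h0K : (0 : ℝ) ∈ K := ⟨le_rfl, le_max_right R 0⟩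
  obtain ⟨m, hmK, hm⟩ := isCompact_Icc.exists_isMaxOn ⟨0, h0K⟩ (hf.mono Set.Icc_subset_Ici_self)
  have hlt : ∀ y, max R 0 < y → f y < f m := fun y hy =>
    (hR y ((le_max_left R 0).trans hy.le)).trans_le (hm h0K)
  have hmax : IsMaxOn f (Set.Ici 0) m := fun y hy => by
    by_cases hyK : y ≤ max R 0
    exacts [hm ⟨hy, hyK⟩, (hlt y (not_le.mp hyK)).le]
  set M := {y ∈ Set.Ici (0 : ℝ) | IsMaxOn f (Set.Ici 0) y}
  have hMeq : M = Set.Ici 0 ∩ f ⁻¹' {f m} := by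
    ext y
    refine ⟨fun hy => ⟨hy.1, le_antisymm (hmax hy.1) (hy.2 hmK.1)⟩, fun hy => ⟨hy.1, ?_⟩⟩
    exact fun z hz => (hmax hz).trans_eq hy.2.symm
  have hMK : M ⊆ K := fun y hy => ⟨hy.1, not_lt.mp fun hyK => (hlt y hyK).not_ge (hy.2 hmK.1)⟩
  have hMclosed : IsClosed M :=
    hMeq ▸ hf.preimage_isClosed_of_isClosed isClosed_Ici isClosed_singleton
  exact (isCompact_Icc.of_isClosed_subset hMclosed hMK).exists_isGreatest ⟨m, hmK.1, hmax⟩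

end IsGreatestMaximizerOn

lemma ConcaveOn.exists_le_add_mul {f : ℝ → ℝ} (hconc : ConcaveOn ℝ (Set.Ici 0) f)
    (hmono : MonotoneOn f (Set.Ici 0)) (hlim : Tendsto (fun t => f (t + 1) - f t) atTop (𝓝 0))
    {ε : ℝ} (hε : 0 < ε) : ∃ B, ∀ t, 0 ≤ t → f t ≤ B + ε * t := by
  obtain ⟨T, hT⟩ := (hlim.eventually (gt_mem_nhds hε)).exists_forall_of_atTop
  set T' := max T 0
  have hT'0 : 0 ≤ T' := le_max_right T 0
  have hstep : f (T' + 1) - f T' < ε := hT T' (le_max_left T 0)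
  refine ⟨f (T' + 1), fun t ht => ?_⟩
  rcases le_or_gt t (T' + 1) with htT | htT
  · have := hmono ht (by simp only [Set.mem_Ici]; linarith) htT
    nlinarith
  · have hslope := hconc.slope_anti_adjacent hT'0 ht (lt_add_one T') htT
    rw [add_sub_cancel_left, div_one, div_le_iff₀ (by linarith)] at hslope
    nlinarith

structure IsBenefitFunction (f : ℝ → ℝ) : Prop where
  continuousOn : ContinuousOn f (Set.Ici 0)
  monotoneOn : MonotoneOn f (Set.Ici 0)
  concaveOn : ConcaveOn ℝ (Set.Ici 0) f
  tendsto_sub : Tendsto (fun t => f (t + 1) - f t) atTop (𝓝 0)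

section Frozen

variable {n : ℕ} (G : SimpleGraph (Fin n)) [DecidableRel G.Adj]

/-- Agent `i`'s total data when the neighbours in `S` hold the amounts `v` and every other
neighbour holds at least as much as `i`. -/
noncomputable def frozenTotal (i : Fin n) (S : Finset (Fin n)) (v : Fin n → ℝ) (x : ℝ) : ℝ :=
  x + ∑ j ∈ G.neighborFinset i, if j ∈ S then min x (v j) else x

noncomputable def frozenUtility (b : Fin n → ℝ → ℝ) (c : Fin n → ℝ) (i : Fin n)
    (S : Finset (Fin n)) (v : Fin n → ℝ) (x : ℝ) : ℝ :=
  b i (frozenTotal G i S v x) - c i * x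

variable {G} {b : Fin n → ℝ → ℝ} {c : Fin n → ℝ} {i : Fin n} {S : Finset (Fin n)}
  {v w X : Fin n → ℝ} {x : ℝ}

lemma frozenTotal_nonneg (hv : ∀ j, 0 ≤ v j) (hx : 0 ≤ x) : 0 ≤ frozenTotal G i S v x :=
  add_nonneg hx <| sum_nonneg fun j _ => by split_ifs; exacts [le_min hx (hv j), hx]

lemma frozenTotal_le (hx : 0 ≤ x) : frozenTotal G i S v x ≤ (n + 1) * x :=
  calc frozenTotal G i S v x ≤ x + ∑ _j ∈ G.neighborFinset i, x :=
        add_le_add_right (sum_le_sum fun j _ => by split_ifs; exacts [min_le_left _ _, le_rfl]) x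
    _ = (#(G.neighborFinset i) + 1) * x := by rw [sum_const, nsmul_eq_mul]; ring
    _ ≤ (n + 1) * x := by
        gcongr
        simpa using card_le_univ (G.neighborFinset i)

lemma frozenTotal_concaveOn {s : Set ℝ} (hs : Convex ℝ s) :
    ConcaveOn ℝ s (frozenTotal G i S v) := by
  have hterm : ∀ j ∈ G.neighborFinset i,
      ConcaveOn ℝ s (fun x => if j ∈ S then min x (v j) else x) := fun j _ => by
    split_ifs
    exacts [(concaveOn_id hs).inf (concaveOn_const (v j) hs), concaveOn_id hs]
  have hsum := sum_induction _ (ConcaveOn ℝ s) (fun _ _ => ConcaveOn.add)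
    (concaveOn_const 0 hs) hterm
  exact ((concaveOn_id hs).add hsum).congr fun x _ => by simp [frozenTotal, Finset.sum_apply]

lemma continuous_frozenTotal : Continuous (frozenTotal G i S v) :=
  continuous_id.add <| continuous_finsetSum _ fun j _ => by split_ifs <;> fun_prop

lemma frozenTotal_congr (h : ∀ j ∈ S, v j = w j) : frozenTotal G i S v = frozenTotal G i S w := by
  ext x
  refine congrArg (x + ·) (sum_congr rfl fun j _ => ?_)
  split_ifs with hj
  · rw [h j hj]
  · rfl

lemma frozenTotal_insert_update {i₀ : Fin n} {y : ℝ} (hi₀ : i₀ ∉ S) (hxy : x ≤ y) :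
    frozenTotal G i (insert i₀ S) (Function.update v i₀ y) x = frozenTotal G i S v x := by
  refine congrArg (x + ·) (sum_congr rfl fun j _ => ?_)
  rcases eq_or_ne j i₀ with rfl | hj
  · simp [hi₀, hxy]
  · simp [hj]

lemma totalG_nonneg (hX : ∀ j, 0 ≤ X j) : 0 ≤ totalG G X i :=
  add_nonneg (hX i) <| sum_nonneg fun j _ => le_min (hX i) (hX j)

lemma totalG_le_frozenTotal (hXv : ∀ j ∈ S, X j ≤ v j) :
    totalG G X i ≤ frozenTotal G i S v (X i) :=
  add_le_add_right (sum_le_sum fun j _ => by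
    split_ifs with hj
    exacts [min_le_min_left _ (hXv j hj), min_le_left _ _]) _

lemma totalG_eq_frozenTotal (h : ∀ j ∈ G.neighborFinset i, j ∉ S → X i ≤ X j) :
    totalG G X i = frozenTotal G i S X (X i) :=
  congrArg (X i + ·) <| sum_congr rfl fun j hj => by
    split_ifs with hjS
    exacts [rfl, min_eq_left (h j hj hjS)]

lemma frozenUtility_concaveOn (hbm : MonotoneOn (b i) (Set.Ici 0))
    (hbc : ConcaveOn ℝ (Set.Ici 0) (b i)) (hv : ∀ j, 0 ≤ v j) :
    ConcaveOn ℝ (Set.Ici 0) (frozenUtility G b c i S v) := by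
  refine ⟨convex_Ici 0, fun x hx y hy a e ha he hae => ?_⟩
  have hAc : ConcaveOn ℝ (Set.Ici 0) (frozenTotal G i S v) := frozenTotal_concaveOn (convex_Ici 0)
  have hA0 : ∀ z ∈ Set.Ici (0 : ℝ), 0 ≤ frozenTotal G i S v z :=
    fun _ hz => frozenTotal_nonneg hv hz
  have hb := hbc.2 (hA0 x hx) (hA0 y hy) ha he hae
  have hmono := hbm (hbc.1 (hA0 x hx) (hA0 y hy) ha he hae)
    (hA0 _ (convex_Ici 0 hx hy ha he hae)) (hAc.2 hx hy ha he hae)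
  simp only [frozenUtility, smul_eq_mul] at hb hmono ⊢
  nlinarith

lemma continuousOn_frozenUtility (hbc : ContinuousOn (b i) (Set.Ici 0)) (hv : ∀ j, 0 ≤ v j) :
    ContinuousOn (frozenUtility G b c i S v) (Set.Ici 0) :=
  (hbc.comp continuous_frozenTotal.continuousOn fun _ hx => frozenTotal_nonneg hv hx).sub
    (by fun_prop)

lemma tendsto_frozenUtility_atBot (hbm : MonotoneOn (b i) (Set.Ici 0))
    (hbc : ConcaveOn ℝ (Set.Ici 0) (b i))
    (hlim : Tendsto (fun t => b i (t + 1) - b i t) atTop (𝓝 0)) (hc : 0 < c i)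
    (hv : ∀ j, 0 ≤ v j) : Tendsto (frozenUtility G b c i S v) atTop atBot := by
  set ε := c i / (2 * (n + 1))
  obtain ⟨B, hB⟩ := hbc.exists_le_add_mul hbm hlim (ε := ε) (by positivity)
  refine tendsto_atBot_mono' atTop ?_ (tendsto_atBot_add_const_left atTop B
    (tendsto_id.const_mul_atTop_of_neg (neg_lt_zero.mpr (half_pos hc))))
  filter_upwards [eventually_ge_atTop 0] with x hx
  have hbound : b i (frozenTotal G i S v x) ≤ B + ε * frozenTotal G i S v x :=
    hB _ (frozenTotal_nonneg hv hx)
  have hle : ε * frozenTotal G i S v x ≤ ε * ((n + 1) * x) := by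
    gcongr
    exact frozenTotal_le hx
  have hcancel : ε * ((n + 1) * x) = c i / 2 * x := by
    simp only [ε]
    field_simp
  simp only [frozenUtility, id]
  linarith

lemma exists_isGreatestMaximizerOn_frozenUtility (hb : IsBenefitFunction (b i)) (hc : 0 < c i)
    (hv : ∀ j, 0 ≤ v j) : ∃ s, IsGreatestMaximizerOn (frozenUtility G b c i S v) (Set.Ici 0) s :=
  IsGreatestMaximizerOn.exists_of_tendsto_atBot (continuousOn_frozenUtility hb.continuousOn hv)
    (tendsto_frozenUtility_atBot hb.monotoneOn hb.concaveOn hb.tendsto_sub hc hv)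

lemma frozenUtility_congr (h : ∀ j ∈ S, v j = w j) :
    frozenUtility G b c i S v = frozenUtility G b c i S w := by
  unfold frozenUtility
  rw [frozenTotal_congr h]

lemma frozenUtility_insert_update {i₀ : Fin n} {y : ℝ} (hi₀ : i₀ ∉ S) :
    Set.EqOn (frozenUtility G b c i (insert i₀ S) (Function.update v i₀ y))
      (frozenUtility G b c i S v) (Set.Iic y) := fun x hxy => by
  simp only [frozenUtility, frozenTotal_insert_update hi₀ hxy]

lemma UG_le_frozenUtility (hbm : MonotoneOn (b i) (Set.Ici 0)) (hX : ∀ j, 0 ≤ X j)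
    (hXv : ∀ j ∈ S, X j ≤ v j) : UG G b c X i ≤ frozenUtility G b c i S v (X i) := by
  have hle := totalG_le_frozenTotal (G := G) (i := i) hXv
  exact sub_le_sub_right (hbm (totalG_nonneg hX) ((totalG_nonneg hX).trans hle) hle) _

lemma UG_eq_frozenUtility (h : ∀ j ∈ G.neighborFinset i, j ∉ S → X i ≤ X j) :
    UG G b c X i = frozenUtility G b c i S X (X i) := by
  rw [UG, frozenUtility, totalG_eq_frozenTotal h]

end Frozen

section Freezing

variable {n : ℕ} (G : SimpleGraph (Fin n)) [DecidableRel G.Adj] (b : Fin n → ℝ → ℝ)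
  (c : Fin n → ℝ)

/-- A stage of the greedy construction: the agents of `F` have been frozen at the amounts `Y`,
in the order given by the ranks `ρ`. -/
structure IsFreezingState (F : Finset (Fin n)) (Y : Fin n → ℝ) (ρ : Fin n → ℕ) : Prop where
  nonneg : ∀ j, 0 ≤ Y j
  rank_lt_card : ∀ j ∈ F, ρ j < #F
  monotone : ∀ j ∈ F, ∀ k ∈ F, ρ j ≤ ρ k → Y j ≤ Y k
  frozen : ∀ i ∈ F,
    IsGreatestMaximizerOn (frozenUtility G b c i {j ∈ F | ρ j < ρ i} Y) (Set.Ici 0) (Y i)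
  unfrozen : ∀ i ∉ F, ∃ s,
    IsGreatestMaximizerOn (frozenUtility G b c i F Y) (Set.Ici 0) s ∧ ∀ j ∈ F, Y j ≤ s

variable {G b c}

lemma isFreezingState_empty (hb : ∀ i, IsBenefitFunction (b i)) (hc : ∀ i, 0 < c i) :
    IsFreezingState G b c ∅ 0 0 where
  nonneg _ := le_rfl
  rank_lt_card := by simp
  monotone := by simp
  frozen := by simp
  unfrozen i _ := (exists_isGreatestMaximizerOn_frozenUtility (hb i) (hc i) fun _ => le_rfl).imp
    fun _ hs => ⟨hs, by simp⟩

variable {F : Finset (Fin n)} {ρ : Fin n → ℕ} {i₀ : Fin n}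

lemma filter_insert_update_rank_self (hi₀ : i₀ ∉ F) (hρ : ∀ j ∈ F, ρ j < #F) :
    {j ∈ insert i₀ F | Function.update ρ i₀ #F j < Function.update ρ i₀ #F i₀} = F := by
  ext j
  rcases eq_or_ne j i₀ with rfl | hj
  · simp [hi₀]
  · simp +contextual [hj, hρ]

lemma filter_insert_update_rank_of_mem (hi₀ : i₀ ∉ F) (hρ : ∀ j ∈ F, ρ j < #F) {i : Fin n}
    (hi : i ∈ F) :
    {j ∈ insert i₀ F | Function.update ρ i₀ #F j < Function.update ρ i₀ #F i} =
      {j ∈ F | ρ j < ρ i} := by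
  have hi' : i ≠ i₀ := ne_of_mem_of_not_mem hi hi₀
  ext j
  rcases eq_or_ne j i₀ with rfl | hj
  · simp [hi₀, hi', (hρ i hi).le]
  · simp [hj, hi']

variable {Y : Fin n → ℝ}

lemma IsFreezingState.freeze (hst : IsFreezingState G b c F Y ρ) (hi₀ : i₀ ∉ F) {y : ℝ}
    (hy : IsGreatestMaximizerOn (frozenUtility G b c i₀ F Y) (Set.Ici 0) y)
    (hYy : ∀ j ∈ F, Y j ≤ y)
    (hunfrozen : ∀ i ∉ insert i₀ F, ∃ t, IsGreatestMaximizerOn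
      (frozenUtility G b c i (insert i₀ F) (Function.update Y i₀ y)) (Set.Ici 0) t ∧ y ≤ t) :
    IsFreezingState G b c (insert i₀ F) (Function.update Y i₀ y) (Function.update ρ i₀ #F) := by
  have hY : ∀ j ∈ F, Function.update Y i₀ y j = Y j := fun j hj =>
    Function.update_of_ne (ne_of_mem_of_not_mem hj hi₀) _ _
  have hYle : ∀ j ∈ insert i₀ F, Function.update Y i₀ y j ≤ y := by
    intro j hj
    rcases mem_insert.mp hj with rfl | hj
    · simp
    · exact (hY j hj).trans_le (hYy j hj)
  refine ⟨fun j => ?_, fun j hj => ?_, fun j hj k hk hjk => ?_, fun i hi => ?_, fun i hi => ?_⟩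
  · rcases eq_or_ne j i₀ with rfl | hj
    · simpa using hy.1.1
    · simpa [hj] using hst.nonneg j
  · rw [card_insert_of_notMem hi₀]
    rcases mem_insert.mp hj with rfl | hj
    · simp
    · simpa [ne_of_mem_of_not_mem hj hi₀] using (hst.rank_lt_card j hj).trans (lt_add_one _)
  · rcases mem_insert.mp hk with rfl | hk'
    · simpa using hYle j hj
    rcases mem_insert.mp hj with rfl | hj'
    · simp [ne_of_mem_of_not_mem hk' hi₀] at hjk
      exact absurd (hst.rank_lt_card k hk') hjk.not_gt
    · rw [hY j hj', hY k hk']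
      simp only [Function.update_of_ne (ne_of_mem_of_not_mem hj' hi₀),
        Function.update_of_ne (ne_of_mem_of_not_mem hk' hi₀)] at hjk
      exact hst.monotone j hj' k hk' hjk
  · rcases mem_insert.mp hi with rfl | hi
    · rw [filter_insert_update_rank_self hi₀ hst.rank_lt_card, frozenUtility_congr hY]
      simpa using hy
    · rw [filter_insert_update_rank_of_mem hi₀ hst.rank_lt_card hi,
        frozenUtility_congr fun j hj => hY j (mem_filter.mp hj).1, hY i hi]
      exact hst.frozen i hi
  · obtain ⟨t, ht, hyt⟩ := hunfrozen i hi
    exact ⟨t, ht, fun j hj => (hYle j hj).trans hyt⟩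

/-- Freezing the agent whose greatest best reply `y` is smallest keeps every other agent's
greatest best reply at least `y`: its surrogate utility changes only beyond `y`, and by concavity
the old one does not decrease on `[0, y]`. -/
lemma IsFreezingState.exists_insert (hb : ∀ i, IsBenefitFunction (b i)) (hc : ∀ i, 0 < c i)
    (hst : IsFreezingState G b c F Y ρ) (hF : Fᶜ.Nonempty) :
    ∃ i₀ ∉ F, ∃ Y' ρ', IsFreezingState G b c (insert i₀ F) Y' ρ' := by
  choose! s hs hsF using hst.unfrozen
  obtain ⟨i₀, hi₀, hmin⟩ := Fᶜ.exists_min_image s hF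
  rw [mem_compl] at hi₀
  have hnonneg : ∀ j, 0 ≤ Function.update Y i₀ (s i₀) j := fun j => by
    rcases eq_or_ne j i₀ with rfl | hj
    · simpa using (hs j hi₀).1.1
    · simpa [hj] using hst.nonneg j
  refine ⟨i₀, hi₀, _, _, hst.freeze hi₀ (hs i₀ hi₀) (hsF i₀ hi₀) fun i hi => ?_⟩
  rw [mem_insert, not_or] at hi
  obtain ⟨t, ht⟩ := exists_isGreatestMaximizerOn_frozenUtility (G := G) (S := insert i₀ F)
    (hb i) (hc i) hnonneg
  refine ⟨t, ht, (hs i hi.2).le_of_eqOn_Icc ?_ (hs i₀ hi₀).1.1 (hmin i (mem_compl.mpr hi.2))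
    ((frozenUtility_insert_update hi₀).symm.mono Set.Icc_subset_Iic_self) ht⟩
  exact frozenUtility_concaveOn (hb i).monotoneOn (hb i).concaveOn hst.nonneg

lemma exists_isFreezingState_univ (hb : ∀ i, IsBenefitFunction (b i)) (hc : ∀ i, 0 < c i) :
    ∃ Z σ, IsFreezingState G b c univ Z σ := by
  suffices ∀ k ≤ n, ∃ F Y ρ, #F = k ∧ IsFreezingState G b c F Y ρ by
    obtain ⟨F, Y, ρ, hF, hst⟩ := this n le_rfl
    rw [eq_univ_of_card F (by simpa using hF)] at hst
    exact ⟨Y, ρ, hst⟩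
  intro k hk
  induction k with
  | zero => exact ⟨∅, 0, 0, rfl, isFreezingState_empty hb hc⟩
  | succ k ih =>
    obtain ⟨F, Y, ρ, hF, hst⟩ := ih (by omega)
    have hFc : Fᶜ.Nonempty := card_pos.mp (by rw [card_compl, Fintype.card_fin, hF]; omega)
    obtain ⟨i₀, hi₀, Y', ρ', hst'⟩ := hst.exists_insert hb hc hFc
    exact ⟨_, Y', ρ', by rw [card_insert_of_notMem hi₀, hF], hst'⟩

namespace IsFreezingState

variable {Z X : Fin n → ℝ} {σ : Fin n → ℕ}

lemma UG_eq (hZ : IsFreezingState G b c univ Z σ) (i : Fin n) :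
    UG G b c Z i = frozenUtility G b c i {j | σ j < σ i} Z (Z i) :=
  UG_eq_frozenUtility fun j _ hj => hZ.monotone i (mem_univ i) j (mem_univ j) (by simpa using hj)

lemma le_of_UG_le (hZ : IsFreezingState G b c univ Z σ) (hbm : ∀ i, MonotoneOn (b i) (Set.Ici 0))
    (hX : ∀ j, 0 ≤ X j) {i : Fin n} (hXZ : ∀ j, σ j < σ i → X j ≤ Z j)
    (hle : UG G b c Z i ≤ UG G b c X i) : X i ≤ Z i :=
  (hZ.frozen i (mem_univ i)).le_of_apply_le (hX i) <| by
    rw [← hZ.UG_eq i]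
    exact hle.trans (UG_le_frozenUtility (hbm i) hX fun j hj => hXZ j (by simpa using hj))

lemma UG_le_of_le (hZ : IsFreezingState G b c univ Z σ) (hbm : ∀ i, MonotoneOn (b i) (Set.Ici 0))
    (hX : ∀ j, 0 ≤ X j) {i : Fin n} (hXZ : ∀ j, σ j < σ i → X j ≤ Z j) :
    UG G b c X i ≤ UG G b c Z i :=
  calc UG G b c X i ≤ frozenUtility G b c i {j | σ j < σ i} Z (X i) :=
        UG_le_frozenUtility (hbm i) hX fun j hj => hXZ j (by simpa using hj)
    _ ≤ frozenUtility G b c i {j | σ j < σ i} Z (Z i) := (hZ.frozen i (mem_univ i)).1.2 (hX i)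
    _ = UG G b c Z i := (hZ.UG_eq i).symm

lemma le_of_forall_UG_le (hZ : IsFreezingState G b c univ Z σ)
    (hbm : ∀ i, MonotoneOn (b i) (Set.Ici 0)) (hX : ∀ j, 0 ≤ X j)
    (hle : ∀ i, UG G b c Z i ≤ UG G b c X i) (i : Fin n) : X i ≤ Z i := by
  induction i using (InvImage.wf σ wellFounded_lt).induction with
  | _ i ih => exact hZ.le_of_UG_le hbm hX ih (hle i)

lemma isNEG (hZ : IsFreezingState G b c univ Z σ) (hbm : ∀ i, MonotoneOn (b i) (Set.Ici 0)) :
    IsNEG G b c Z := by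
  refine ⟨hZ.nonneg, fun i y hy => hZ.UG_le_of_le hbm (fun j => ?_) fun j hj => ?_⟩
  · rcases eq_or_ne j i with rfl | hj
    · simpa using hy
    · simpa [hj] using hZ.nonneg j
  · rw [Function.update_of_ne (ne_of_apply_ne σ hj.ne)]

lemma not_paretoDominated (hZ : IsFreezingState G b c univ Z σ)
    (hbm : ∀ i, MonotoneOn (b i) (Set.Ici 0)) :
    ¬ ∃ X : Fin n → ℝ, (∀ i, 0 ≤ X i) ∧ (∀ i, UG G b c Z i ≤ UG G b c X i) ∧
      ∃ j, UG G b c Z j < UG G b c X j := by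
  rintro ⟨X, hX, hle, j, hlt⟩
  exact hlt.not_ge (hZ.UG_le_of_le hbm hX fun k _ => hZ.le_of_forall_UG_le hbm hX hle k)

end IsFreezingState

end Freezing

theorem graph_exists_pareto_undominated_equilibrium_general (n : ℕ)
    (G : SimpleGraph (Fin n)) [DecidableRel G.Adj]
    (b : Fin n → ℝ → ℝ) (c : Fin n → ℝ)
    (hc : ∀ i, 0 < c i)
    (hbc : ∀ i, ContinuousOn (b i) (Set.Ici 0))
    (hbm : ∀ i, MonotoneOn (b i) (Set.Ici 0))
    (hbconc : ∀ i, ConcaveOn ℝ (Set.Ici 0) (b i))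
    (hvanish : ∀ i, Filter.Tendsto (fun t : ℝ => b i (t + 1) - b i t)
      Filter.atTop (nhds 0)) :
    ∃ Xstar : Fin n → ℝ, IsNEG G b c Xstar ∧
      ¬ ∃ X' : Fin n → ℝ, (∀ i, 0 ≤ X' i) ∧
        (∀ i, UG G b c Xstar i ≤ UG G b c X' i) ∧
        (∃ j, UG G b c Xstar j < UG G b c X' j) := by
  obtain ⟨Z, σ, hZ⟩ := exists_isFreezingState_univ (G := G)
    (fun i => ⟨hbc i, hbm i, hbconc i, hvanish i⟩) hc
  exact ⟨Z, hZ.isNEG hbm, hZ.not_paretoDominated hbm⟩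

/-- Graph-restricted fair exchange admits a globally Pareto-undominated pure Nash
equilibrium: there is an equilibrium `X*` such that no nonnegative profile Pareto-dominates
it. -/
theorem graph_exists_pareto_undominated_equilibrium (n : ℕ) (hn : 1 ≤ n)
    (G : SimpleGraph (Fin n)) [DecidableRel G.Adj]
    (b : Fin n → ℝ → ℝ) (c : Fin n → ℝ)
    (hc : ∀ i, 0 < c i)
    (hbc : ∀ i, ContinuousOn (b i) (Set.Ici 0))
    (hbm : ∀ i, MonotoneOn (b i) (Set.Ici 0))
    (hbconc : ∀ i, ConcaveOn ℝ (Set.Ici 0) (b i))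
    (hvanish : ∀ i, Filter.Tendsto (fun t : ℝ => b i (t + 1) - b i t)
      Filter.atTop (nhds 0)) :
    ∃ Xstar : Fin n → ℝ, IsNEG G b c Xstar ∧
      ¬ ∃ X' : Fin n → ℝ, (∀ i, 0 ≤ X' i) ∧
        (∀ i, UG G b c Xstar i ≤ UG G b c X' i) ∧
        (∃ j, UG G b c Xstar j < UG G b c X' j) :=
  graph_exists_pareto_undominated_equilibrium_general n G b c hc hbc hbm hbconc hvanish
end

section
/- In the discrete fair-exchange game, unit deviations suffice: fix an agent i and integer values X j ∈ ℕ for all j ≠ i. Then the discrete marginal gain m ↦ U_i(m+1, X_{−i}) − U_i(m, X_{−i}) is nonincreasing in m ∈ ℕ. Consequently, if X is an integer profile such that for every agent i, U_i(X i + 1, X_{−i}) ≤ U_i(X) and (if X i ≥ 1) U_i(X i − 1, X_{−i}) ≤ U_i(X), then X is a pure Nash equilibrium of the discrete game: for every agent i and every m ∈ ℕ, U_i(m, X_{−i}) ≤ U_i(X). -/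
open Finset

/-- Agent `i`'s total accessible data under discrete fair exchange. -/
def totalD {n : ℕ} (X : Fin n → ℕ) (i : Fin n) : ℕ :=
  X i + ∑ j ∈ univ.filter (fun j => j ≠ i), min (X i) (X j)

/-- Agent `i`'s utility in the discrete fair-exchange game. -/
noncomputable def UD {n : ℕ} (b : Fin n → ℝ → ℝ) (c : Fin n → ℝ)
    (X : Fin n → ℕ) (i : Fin n) : ℝ :=
  b i (totalD X i : ℝ) - c i * (X i : ℝ)

/-- Concave monotone chord comparison. -/
lemma concave_chord {g : ℝ → ℝ} (hconc : ConcaveOn ℝ (Set.Ici 0) g)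
    (hmono : MonotoneOn g (Set.Ici 0))
    {p q r s : ℝ} (hp : 0 ≤ p) (hpq : p < q) (hpr : p ≤ r) (hqs : q ≤ s) (hrs : r < s)
    (hlen : s - r ≤ q - p) : g s - g r ≤ g q - g p := by
  have hq : 0 ≤ q := le_trans hp hpq.le
  have hr : 0 ≤ r := le_trans hp hpr
  have hs : 0 ≤ s := le_trans hr hrs.le
  have hps : p < s := lt_of_lt_of_le hpq hqs
  have hcv : ConvexOn ℝ (Set.Ici 0) (fun x => -g x) := hconc.neg
  have hA := hcv.secant_mono (a := p) (x := q) (y := s) hp hq hs hpq.ne' hps.ne' hqs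
  have hB := hcv.secant_mono (a := s) (x := p) (y := r) hs hp hr hps.ne hrs.ne hpr
  have h1 : (g s - g p) / (s - p) ≤ (g q - g p) / (q - p) := by
    rw [div_le_div_iff₀ (by linarith) (by linarith)] at hA ⊢
    nlinarith
  have h2 : (g s - g r) / (s - r) ≤ (g s - g p) / (s - p) := by
    have hnum1 : (-g p - -g s) = (g s - g p) := by ring
    have hden1 : (p - s) = -(s - p) := by ring
    have hnum2 : (-g r - -g s) = (g s - g r) := by ring
    have hden2 : (r - s) = -(s - r) := by ring
    rw [hnum1, hden1, hnum2, hden2, div_neg, div_neg, neg_le_neg_iff] at hB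
    exact hB
  have hslope : 0 ≤ (g q - g p) / (q - p) :=
    div_nonneg (by linarith [hmono hp hq hpq.le]) (by linarith)
  have key : (g s - g r) / (s - r) ≤ (g q - g p) / (q - p) := h2.trans h1
  calc g s - g r = (g s - g r) / (s - r) * (s - r) :=
        (div_mul_cancel₀ _ (sub_ne_zero.mpr hrs.ne')).symm
    _ ≤ (g q - g p) / (q - p) * (s - r) :=
        mul_le_mul_of_nonneg_right key (by linarith)
    _ ≤ (g q - g p) / (q - p) * (q - p) :=
        mul_le_mul_of_nonneg_left hlen hslope
    _ = g q - g p := div_mul_cancel₀ _ (sub_ne_zero.mpr hpq.ne')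

/-- From unit-deviation optimality and antitone marginal gains, global optimality. -/
lemma unit_opt {f : ℕ → ℝ} {N : ℕ} (hg : Antitone fun m => f (m + 1) - f m)
    (h1 : f (N + 1) ≤ f N) (h2 : 1 ≤ N → f (N - 1) ≤ f N) :
    ∀ m, f m ≤ f N := by
  have hup : ∀ k, f (N + k) ≤ f N := by
    intro k
    induction k with
    | zero => simp
    | succ k ih =>
      have hgk : f (N + k + 1) - f (N + k) ≤ f (N + 1) - f N :=
        hg (Nat.le_add_right N k)
      have : f (N + (k + 1)) = f (N + k + 1) := by rw [Nat.add_succ]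
      rw [this]
      linarith
  have hdown : ∀ k, f (N - k) ≤ f N := by
    intro k
    induction k with
    | zero => simp
    | succ k ih =>
      rcases le_or_gt N k with h | h
      · have : N - (k + 1) = N - k := by omega
        rw [this]; exact ih
      · have hN1 : 1 ≤ N := by omega
        have heq : f (N - 1 + 1) = f N := by congr 1; omega
        have hg0 : 0 ≤ f N - f (N - 1) := by
          have := h2 hN1
          linarith [heq ▸ (le_refl (f (N - 1 + 1)))]
        have hstep : f N - f (N - 1) ≤ f (N - (k + 1) + 1) - f (N - (k + 1)) := by
          have := hg (show N - (k + 1) ≤ N - 1 by omega)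
          simpa [heq] using this
        have heq2 : N - (k + 1) + 1 = N - k := by omega
        rw [heq2] at hstep
        linarith
  intro m
  rcases le_or_gt N m with h | h
  · have : m = N + (m - N) := by omega
    rw [this]; exact hup _
  · have : m = N - (N - m) := by omega
    rw [this]; exact hdown _

/-- In the discrete fair-exchange game, unit deviations suffice: the discrete marginal gain
`m ↦ U_i(m+1, X₋ᵢ) − U_i(m, X₋ᵢ)` is nonincreasing in `m`; consequently, any integer
profile at which no agent gains from a unit deviation (up, or down when possible) is a pure
Nash equilibrium of the discrete game. -/
theorem discrete_unit_deviations_suffice (n : ℕ)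
    (b : Fin n → ℝ → ℝ) (c : Fin n → ℝ)
    (hc : ∀ i, 0 < c i)
    (hbc : ∀ i, ContinuousOn (b i) (Set.Ici 0))
    (hbm : ∀ i, MonotoneOn (b i) (Set.Ici 0))
    (hbconc : ∀ i, ConcaveOn ℝ (Set.Ici 0) (b i))
    (X : Fin n → ℕ) :
    (∀ i, Antitone (fun m : ℕ =>
        UD b c (Function.update X i (m + 1)) i - UD b c (Function.update X i m) i)) ∧
      ((∀ i, UD b c (Function.update X i (X i + 1)) i ≤ UD b c X i ∧
          (1 ≤ X i → UD b c (Function.update X i (X i - 1)) i ≤ UD b c X i)) →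
        ∀ i, ∀ m : ℕ, UD b c (Function.update X i m) i ≤ UD b c X i) := by
  have hT : ∀ (i : Fin n) (m : ℕ), totalD (Function.update X i m) i =
      m + ∑ j ∈ univ.filter (fun j => j ≠ i), min m (X j) := by
    intro i m
    unfold totalD
    rw [Function.update_self]
    congr 1
    refine Finset.sum_congr rfl fun j hj => ?_
    rw [Function.update_of_ne (Finset.mem_filter.mp hj).2]
  have hanti : ∀ i, Antitone (fun m : ℕ =>
      UD b c (Function.update X i (m + 1)) i - UD b c (Function.update X i m) i) := by
    intro i
    set T : ℕ → ℕ := fun m => m + ∑ j ∈ univ.filter (fun j => j ≠ i), min m (X j) with hTdef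
    have hTmono : ∀ m, T m < T (m + 1) := by
      intro m
      have : ∑ j ∈ univ.filter (fun j => j ≠ i), min m (X j) ≤
          ∑ j ∈ univ.filter (fun j => j ≠ i), min (m + 1) (X j) :=
        Finset.sum_le_sum fun j _ => by omega
      simp only [hTdef]; omega
    have hTconc : ∀ m, T (m + 2) + T m ≤ 2 * T (m + 1) := by
      intro m
      have key : ∑ j ∈ univ.filter (fun j => j ≠ i), (min (m + 2) (X j) + min m (X j)) ≤
          ∑ j ∈ univ.filter (fun j => j ≠ i), 2 * min (m + 1) (X j) :=
        Finset.sum_le_sum fun j _ => by omega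
      have hsplit : ∑ j ∈ univ.filter (fun j => j ≠ i), (min (m + 2) (X j) + min m (X j)) =
          ∑ j ∈ univ.filter (fun j => j ≠ i), min (m + 2) (X j) +
            ∑ j ∈ univ.filter (fun j => j ≠ i), min m (X j) := Finset.sum_add_distrib
      have hmul : ∑ j ∈ univ.filter (fun j => j ≠ i), 2 * min (m + 1) (X j) =
          2 * ∑ j ∈ univ.filter (fun j => j ≠ i), min (m + 1) (X j) :=
        (Finset.mul_sum _ _ _).symm
      rw [hsplit, hmul] at key
      simp only [hTdef]
      omega
    have hcast : ∀ k : ℕ, (totalD (Function.update X i k) i : ℝ) = ((T k : ℕ) : ℝ) := by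
      intro k
      rw [hT i k]
    apply antitone_nat_of_succ_le
    intro m
    have hstep : b i ((T (m + 1 + 1) : ℕ) : ℝ) - b i ((T (m + 1) : ℕ) : ℝ) ≤
        b i ((T (m + 1) : ℕ) : ℝ) - b i ((T m : ℕ) : ℝ) := by
      apply concave_chord (hbconc i) (hbm i)
      · positivity
      · exact_mod_cast hTmono m
      · exact_mod_cast (hTmono m).le
      · exact_mod_cast (hTmono (m + 1)).le
      · exact_mod_cast hTmono (m + 1)
      · have h1 : (T (m + 2) : ℝ) + T m ≤ 2 * T (m + 1) := by exact_mod_cast hTconc m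
        have h2 : T (m + 1 + 1) = T (m + 2) := by norm_num
        rw [h2]
        linarith
    simp only [UD, Function.update_self, hcast]
    push_cast
    linarith
  refine ⟨hanti, fun hdev i m => ?_⟩
  have hself : Function.update X i (X i) = X := Function.update_eq_self i X
  obtain ⟨h1, h2⟩ := hdev i
  have := unit_opt (f := fun m => UD b c (Function.update X i m) i) (N := X i)
    (hanti i) (by simpa [hself] using h1) (fun h => by simpa [hself] using h2 h) m
  simpa [hself] using this
end

section
/- The discrete fair-exchange game admits a globally Pareto-undominated pure Nash equilibrium: if every agent's benefit function b_i is continuous, nondecreasing, and concave on [0, ∞) with the vanishing-marginal-value condition, and every cost c_i is positive, then there exists an integer collection profile X* ∈ ℕ^n that is a pure Nash equilibrium of the discrete game and such that no integer profile X' ∈ ℕ^n satisfies U_i(X') ≥ U_i(X*) for all agents i and U_j(X') > U_j(X*) for some agent j. -/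
open Finset

/-- `X` is a pure Nash equilibrium of the discrete fair-exchange game. -/
def IsNED {n : ℕ} (b : Fin n → ℝ → ℝ) (c : Fin n → ℝ) (X : Fin n → ℕ) : Prop :=
  ∀ i, ∀ m : ℕ, UD b c (Function.update X i m) i ≤ UD b c X i

/-!
Run the following procedure. All agents start active with no data; in each round every active
agent collects one more unit, and the agents kept active are the largest set `S` of currently
active ones each of whose members values the `#S` units of data it would gain at least at its cost
(such sets are closed under union, so a largest one exists). Positive costs and vanishing marginal
value stop the procedure. Let `X* i` be the number of rounds agent `i` stays active: the level sets
of `X*` are the active sets, so `t_i(X*)` is the data accrued after `X* i` rounds.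

Dropping units loses increments each worth at least `c i`. Adding `r` units brings at most
`r (#A + 1)` data, `A` the set that outlasted `i`; by concavity this is worth at most `r` times the
gain from `#A + 1` units, which maximality of `A` puts below `c i`. If `Z` weakly Pareto-dominates
`X*`, the same estimate shows, by induction on `k`, that the agents with `Z j > k` together with the
`(k+1)`-st active set form a viable subset of the `k`-th one, so they lie in the `(k+1)`-st active
set; then every agent gets at most its `X*` utility under `Z`.
-/

namespace FairExchange

noncomputable def gain (f : ℝ → ℝ) (T s : ℕ) : ℝ := f ((T + s : ℕ) : ℝ) - f (T : ℝ)

section Gain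

variable {f : ℝ → ℝ}

lemma gain_add (f : ℝ → ℝ) (T s s' : ℕ) :
    gain f T (s + s') = gain f T s + gain f (T + s) s' := by
  simp only [gain, add_assoc]
  ring

lemma gain_mono (hf : MonotoneOn f (Set.Ici 0)) (T : ℕ) : Monotone (gain f T) := by
  intro s s' hs
  have : f ((T + s : ℕ) : ℝ) ≤ f ((T + s' : ℕ) : ℝ) :=
    hf (Set.mem_Ici.2 (by positivity)) (Set.mem_Ici.2 (by positivity)) (by gcongr)
  simp only [gain]
  linarith

lemma gain_nonneg (hf : MonotoneOn f (Set.Ici 0)) (T s : ℕ) : 0 ≤ gain f T s := by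
  simpa [gain] using gain_mono hf T (Nat.zero_le s)

lemma gain_one_antitone (hf : ConcaveOn ℝ (Set.Ici 0) f) : Antitone fun T => gain f T 1 := by
  refine antitone_nat_of_succ_le fun T => ?_
  have h := hf.slope_anti_adjacent (x := T) (y := T + 1) (z := T + 2)
    (Set.mem_Ici.2 (by positivity)) (Set.mem_Ici.2 (by positivity)) (by linarith) (by linarith)
  simp only [gain]
  push_cast
  convert h using 1 <;> ring_nf

lemma gain_antitone (hf : ConcaveOn ℝ (Set.Ici 0) f) (s : ℕ) :
    Antitone fun T => gain f T s := by
  induction s with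
  | zero => simp [gain, antitone_const]
  | succ s ih =>
    intro T T' hT
    simp only [gain_add f _ s 1]
    exact add_le_add (ih hT) (gain_one_antitone hf (by omega))

lemma gain_mul_le (hf : ConcaveOn ℝ (Set.Ici 0) f) (T r s : ℕ) :
    gain f T (r * s) ≤ r * gain f T s := by
  induction r with
  | zero => simp [gain]
  | succ r ih =>
    rw [add_mul, one_mul, gain_add]
    push_cast
    linarith [gain_antitone hf s (Nat.le_add_right T (r * s))]

/-- Buying `r ≥ 1` further units at unit cost `c` is worth it only if the data they bring in,
at most `s` per unit, are worth `c`. -/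
lemma le_gain_of_profitable (hm : MonotoneOn f (Set.Ici 0)) (hf : ConcaveOn ℝ (Set.Ici 0) f)
    {c : ℝ} {T t x r s : ℕ} (hr : 0 < r) (ht : t ≤ T + r * s)
    (h : f T - c * x ≤ f t - c * (x + r : ℕ)) : c ≤ gain f T s := by
  have hft : f t ≤ f ((T + r * s : ℕ) : ℝ) :=
    hm (Set.mem_Ici.2 (by positivity)) (Set.mem_Ici.2 (by positivity)) (by exact_mod_cast ht)
  have hmul : r * c ≤ r * gain f T s := by
    have := gain_mul_le hf T r s
    simp only [gain] at this ⊢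
    push_cast at h
    linarith
  exact le_of_mul_le_mul_left hmul (by exact_mod_cast hr)

end Gain

section Profile

variable {n : ℕ}

lemma totalD_eq_sum_min (X : Fin n → ℕ) (i : Fin n) : totalD X i = ∑ j, min (X i) (X j) := by
  rw [totalD, filter_ne', ← add_sum_erase _ _ (mem_univ i), min_self]

/-- The `l`-th unit agent `i` collects is shared with every agent collecting more than `l`. -/
lemma totalD_eq_sum_card (X : Fin n → ℕ) (i : Fin n) :
    totalD X i = ∑ l ∈ range (X i), #{j | l < X j} := by
  have hmin : ∀ j, min (X i) (X j) = #{l ∈ range (X i) | l < X j} := by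
    intro j
    rw [show {l ∈ range (X i) | l < X j} = range (min (X i) (X j)) by ext; simp, card_range]
  simp only [totalD_eq_sum_min, hmin, card_eq_sum_ones, sum_filter]
  exact sum_comm

lemma totalD_le (X : Fin n → ℕ) (i : Fin n) {x : ℕ} (hx : x ≤ X i) :
    totalD X i ≤ ∑ l ∈ range x, #{j | l < X j} + (X i - x) * #{j | x < X j} := by
  rw [totalD_eq_sum_card, ← sum_range_add_sum_Ico _ hx]
  gcongr
  calc ∑ l ∈ Ico x (X i), #{j | l < X j}
      ≤ ∑ _l ∈ Ico x (X i), #{j | x < X j} := by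
        refine sum_le_sum fun l hl => card_le_card fun j => ?_
        simp only [mem_filter, mem_univ, true_and, mem_Ico] at hl ⊢
        omega
    _ = (X i - x) * #{j | x < X j} := by rw [sum_const, Nat.card_Ico, smul_eq_mul]

end Profile

section Rounds

variable {n : ℕ} (b : Fin n → ℝ → ℝ) (c : Fin n → ℝ)

def IsViable (T : ℕ) (S : Finset (Fin n)) : Prop := ∀ i ∈ S, c i ≤ gain (b i) T #S

variable {b c}

lemma IsViable.union (hbm : ∀ i, MonotoneOn (b i) (Set.Ici 0)) {T : ℕ} {S S' : Finset (Fin n)}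
    (hS : IsViable b c T S) (hS' : IsViable b c T S') : IsViable b c T (S ∪ S') := by
  intro i hi
  rcases mem_union.1 hi with hi | hi
  · exact (hS i hi).trans (gain_mono (hbm i) T (card_le_card subset_union_left))
  · exact (hS' i hi).trans (gain_mono (hbm i) T (card_le_card subset_union_right))

variable (b c)

open Classical in
noncomputable def core (A : Finset (Fin n)) (T : ℕ) : Finset (Fin n) :=
  {S ∈ A.powerset | IsViable b c T S}.sup id

variable {b c}

lemma core_subset (A : Finset (Fin n)) (T : ℕ) : core b c A T ⊆ A := by
  classical
  exact Finset.sup_le fun S hS => mem_powerset.1 (mem_filter.1 hS).1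

lemma subset_core {A S : Finset (Fin n)} {T : ℕ} (hSA : S ⊆ A) (hS : IsViable b c T S) :
    S ⊆ core b c A T := by
  classical
  exact le_sup (f := id) (mem_filter.2 ⟨mem_powerset.2 hSA, hS⟩)

lemma isViable_core (hbm : ∀ i, MonotoneOn (b i) (Set.Ici 0)) (A : Finset (Fin n)) (T : ℕ) :
    IsViable b c T (core b c A T) := by
  classical
  refine sup_induction (fun i hi => absurd hi (notMem_empty i))
    (fun S hS S' hS' => hS.union hbm hS') fun S hS => (mem_filter.1 hS).2

variable (b c)

/-- Round `k` of the fair-exchange procedure: the agents still collecting and the data each of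
them holds. -/
noncomputable def stage : ℕ → Finset (Fin n) × ℕ
  | 0 => (univ, 0)
  | k + 1 =>
    let A := core b c (stage k).1 (stage k).2
    (A, (stage k).2 + #A)

noncomputable def active (k : ℕ) : Finset (Fin n) := (stage b c k).1

noncomputable def accrued (k : ℕ) : ℕ := (stage b c k).2

variable {b c}

lemma active_zero : active b c 0 = univ := rfl

lemma active_succ (k : ℕ) : active b c (k + 1) = core b c (active b c k) (accrued b c k) := rfl

lemma accrued_succ (k : ℕ) : accrued b c (k + 1) = accrued b c k + #(active b c (k + 1)) := rfl

lemma active_antitone : Antitone (active b c) :=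
  antitone_nat_of_succ_le fun _ => core_subset _ _

lemma accrued_eq_sum (k : ℕ) : accrued b c k = ∑ l ∈ range k, #(active b c (l + 1)) := by
  induction k with
  | zero => rfl
  | succ k ih => rw [sum_range_succ, ← ih, accrued_succ]

lemma le_gain_of_mem_active_succ (hbm : ∀ i, MonotoneOn (b i) (Set.Ici 0)) {k : ℕ} {i : Fin n}
    (hi : i ∈ active b c (k + 1)) :
    c i ≤ gain (b i) (accrued b c k) #(active b c (k + 1)) :=
  isViable_core hbm _ _ i hi

lemma gain_lt_of_mem_active_of_notMem_succ (hbm : ∀ i, MonotoneOn (b i) (Set.Ici 0)) {k : ℕ}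
    {i : Fin n} (hi : i ∈ active b c k) (hi' : i ∉ active b c (k + 1)) :
    gain (b i) (accrued b c k) (#(active b c (k + 1)) + 1) < c i := by
  by_contra! hle
  have hviable : IsViable b c (accrued b c k) (insert i (active b c (k + 1))) := by
    rw [IsViable, card_insert_of_notMem hi']
    intro j hj
    rcases mem_insert.1 hj with rfl | hj
    · exact hle
    · exact (le_gain_of_mem_active_succ hbm hj).trans (gain_mono (hbm j) _ (Nat.le_succ _))
  exact hi' (subset_core (insert_subset hi (active_antitone (Nat.le_succ k))) hviable
    (mem_insert_self i _))

end Rounds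

section Termination

variable {n : ℕ} {b : Fin n → ℝ → ℝ} {c : Fin n → ℝ}

lemma le_accrued_of_nonempty {k : ℕ} (h : (active b c k).Nonempty) : k ≤ accrued b c k := by
  induction k with
  | zero => exact Nat.zero_le _
  | succ k ih =>
    have := ih (h.mono (active_antitone (Nat.le_succ k)))
    have := card_pos.2 h
    rw [accrued_succ]
    omega

lemma eventually_mul_gain_lt {f : ℝ → ℝ} {ε : ℝ} (hε : 0 < ε) (m : ℕ)
    (hf : Filter.Tendsto (fun t : ℝ => f (t + 1) - f t) Filter.atTop (nhds 0)) :
    ∃ N : ℕ, ∀ t ≥ N, m * gain f t 1 < ε := by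
  have h := ((hf.const_mul (m : ℝ)).comp tendsto_natCast_atTop_atTop).eventually_lt_const
    (by simpa using hε)
  obtain ⟨N, hN⟩ := Filter.eventually_atTop.1 h
  refine ⟨N, fun t ht => ?_⟩
  simpa [gain] using hN t ht

lemma exists_active_eq_empty (hc : ∀ i, 0 < c i) (hbm : ∀ i, MonotoneOn (b i) (Set.Ici 0))
    (hbconc : ∀ i, ConcaveOn ℝ (Set.Ici 0) (b i))
    (hvanish : ∀ i, Filter.Tendsto (fun t : ℝ => b i (t + 1) - b i t)
      Filter.atTop (nhds 0)) :
    ∃ K, active b c K = ∅ := by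
  choose N hN using fun i => eventually_mul_gain_lt (hc i) n (hvanish i)
  set K := univ.sup N
  refine ⟨K + 1, eq_empty_iff_forall_notMem.2 fun i hi => lt_irrefl (c i) ?_⟩
  have hKT : K ≤ accrued b c K :=
    le_accrued_of_nonempty ⟨i, active_antitone (Nat.le_succ K) hi⟩
  have hcard : (#(active b c (K + 1)) : ℝ) ≤ n := by
    exact_mod_cast (card_le_univ _).trans_eq (Fintype.card_fin n)
  calc c i ≤ gain (b i) (accrued b c K) (#(active b c (K + 1)) * 1) := by
        simpa using le_gain_of_mem_active_succ hbm hi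
    _ ≤ #(active b c (K + 1)) * gain (b i) (accrued b c K) 1 := gain_mul_le (hbconc i) _ _ _
    _ ≤ n * gain (b i) (accrued b c K) 1 :=
        mul_le_mul_of_nonneg_right hcard (gain_nonneg (hbm i) _ _)
    _ < c i := hN i _ ((le_sup (mem_univ i)).trans hKT)

end Termination

section Equilibrium

variable {n : ℕ} (b : Fin n → ℝ → ℝ) (c : Fin n → ℝ)

open Classical in
noncomputable def fairProfile (K : ℕ) (i : Fin n) : ℕ :=
  Nat.findGreatest (fun k => i ∈ active b c k) K

variable {b c} {K : ℕ}

lemma mem_active_iff (hK : active b c K = ∅) {i : Fin n} {k : ℕ} :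
    i ∈ active b c k ↔ k ≤ fairProfile b c K i := by
  classical
  constructor
  · intro hi
    by_cases hk : k ≤ K
    · exact Nat.le_findGreatest hk hi
    · exact absurd (active_antitone (le_of_not_ge hk) hi) (by simp [hK])
  · intro hk
    refine active_antitone hk
      (Nat.findGreatest_spec (P := fun k => i ∈ active b c k) (m := 0) (Nat.zero_le K) ?_)
    simp [active_zero]

lemma filter_lt_fairProfile (hK : active b c K = ∅) (l : ℕ) :
    ({j | l < fairProfile b c K j} : Finset (Fin n)) = active b c (l + 1) := by
  ext j
  simp [mem_active_iff hK]

lemma totalD_fairProfile (hK : active b c K = ∅) (i : Fin n) :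
    totalD (fairProfile b c K) i = accrued b c (fairProfile b c K i) := by
  rw [totalD_eq_sum_card, accrued_eq_sum]
  exact sum_congr rfl fun l _ => by rw [filter_lt_fairProfile hK]

lemma gain_lt_of_fairProfile (hbm : ∀ i, MonotoneOn (b i) (Set.Ici 0))
    (hK : active b c K = ∅) (i : Fin n) :
    gain (b i) (accrued b c (fairProfile b c K i)) (#(active b c (fairProfile b c K i + 1)) + 1)
      < c i :=
  gain_lt_of_mem_active_of_notMem_succ hbm ((mem_active_iff hK).2 le_rfl)
    fun h => by simpa using (mem_active_iff hK).1 h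

lemma sub_mul_le_of_mem_active (hbm : ∀ i, MonotoneOn (b i) (Set.Ici 0)) {i : Fin n} {m k : ℕ}
    (hi : i ∈ active b c k) (hm : m ≤ k) :
    b i (accrued b c m) - c i * m ≤ b i (accrued b c k) - c i * k := by
  induction k, hm using Nat.le_induction with
  | base => exact le_rfl
  | succ k hmk ih =>
    have hgain := le_gain_of_mem_active_succ hbm hi
    have := ih (active_antitone (Nat.le_succ k) hi)
    simp only [gain, ← accrued_succ] at hgain
    push_cast
    linarith

lemma sum_card_le_accrued {Z : Fin n → ℕ} {x : ℕ}
    (hZ : ∀ l < x, ∀ j, l < Z j → j ∈ active b c (l + 1)) :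
    ∑ l ∈ range x, #{j | l < Z j} ≤ accrued b c x := by
  rw [accrued_eq_sum]
  exact sum_le_sum fun l hl => card_le_card fun j hj => hZ l (mem_range.1 hl) j (by simpa using hj)

lemma UD_le_fairProfile (hbm : ∀ i, MonotoneOn (b i) (Set.Ici 0))
    (hK : active b c K = ∅) {Z : Fin n → ℕ} {i : Fin n}
    (hZ : ∀ l < Z i, ∀ j, l < Z j → j ∈ active b c (l + 1)) :
    UD b c Z i ≤ UD b c (fairProfile b c K) i := by
  have hZi : Z i ≤ fairProfile b c K i := by
    rcases Nat.eq_zero_or_pos (Z i) with h | h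
    · omega
    · have := hZ (Z i - 1) (by omega) i (by omega)
      rwa [Nat.sub_add_cancel h, mem_active_iff hK] at this
  have htotal : totalD Z i ≤ accrued b c (Z i) := by
    simpa using (totalD_le Z i le_rfl).trans (by simpa using sum_card_le_accrued hZ)
  have hb : b i (totalD Z i) ≤ b i (accrued b c (Z i)) :=
    hbm i (Set.mem_Ici.2 (by positivity)) (Set.mem_Ici.2 (by positivity)) (by exact_mod_cast htotal)
  have := sub_mul_le_of_mem_active hbm ((mem_active_iff hK).2 le_rfl) hZi
  rw [UD, UD, totalD_fairProfile hK]
  linarith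

lemma le_gain_of_UD_le (hbm : ∀ i, MonotoneOn (b i) (Set.Ici 0))
    (hbconc : ∀ i, ConcaveOn ℝ (Set.Ici 0) (b i)) (hK : active b c K = ∅)
    {Z : Fin n → ℕ} {i : Fin n} (hx : fairProfile b c K i < Z i)
    (hZ : ∀ l < fairProfile b c K i, ∀ j, l < Z j → j ∈ active b c (l + 1))
    (hU : UD b c (fairProfile b c K) i ≤ UD b c Z i) :
    c i ≤ gain (b i) (accrued b c (fairProfile b c K i)) #{j | fairProfile b c K i < Z j} := by
  have htotal := (totalD_le Z i hx.le).trans (Nat.add_le_add_right (sum_card_le_accrued hZ) _)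
  refine le_gain_of_profitable (hbm i) (hbconc i) (x := fairProfile b c K i)
    (Nat.sub_pos_of_lt hx) htotal ?_
  rw [UD, UD, totalD_fairProfile hK] at hU
  rwa [Nat.add_sub_cancel' hx.le]

lemma filter_lt_update_subset (X : Fin n → ℕ) (i : Fin n) (m l : ℕ) :
    ({j | l < Function.update X i m j} : Finset (Fin n)) ⊆
      insert i ({j | l < X j} : Finset (Fin n)) := by
  intro j hj
  by_cases hji : j = i
  · simp [hji]
  · simpa [hji] using hj

lemma isNED_fairProfile (hbm : ∀ i, MonotoneOn (b i) (Set.Ici 0))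
    (hbconc : ∀ i, ConcaveOn ℝ (Set.Ici 0) (b i)) (hK : active b c K = ∅) :
    IsNED b c (fairProfile b c K) := by
  intro i m
  set x := fairProfile b c K i
  set Z := Function.update (fairProfile b c K) i m
  have hZi : Z i = m := by simp [Z]
  have hZ : ∀ l < x, ∀ j, l < Z j → j ∈ active b c (l + 1) := fun l hl j hj => by
    by_cases hji : j = i
    · exact hji ▸ (mem_active_iff hK).2 hl
    · have hZj : Z j = fairProfile b c K j := Function.update_of_ne hji _ _
      rw [hZj] at hj
      exact (mem_active_iff hK).2 hj
  rcases le_or_gt m x with hm | hm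
  · exact UD_le_fairProfile hbm hK fun l hl => hZ l (by omega)
  · by_contra! hU
    have hgain := le_gain_of_UD_le hbm hbconc hK (by omega) hZ hU.le
    have hcard : #{j | x < Z j} ≤ #(active b c (x + 1)) + 1 := by
      have := card_le_card (filter_lt_update_subset (fairProfile b c K) i m x)
      rw [filter_lt_fairProfile hK] at this
      exact this.trans (card_insert_le _ _)
    linarith [gain_lt_of_fairProfile hbm hK i, gain_mono (hbm i) (accrued b c x) hcard]

end Equilibrium

section Pareto

variable {n : ℕ} {b : Fin n → ℝ → ℝ} {c : Fin n → ℝ} {K : ℕ}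

/-- The agents collecting more than `k` units under `Z`, together with `active (k + 1)`, form a
viable subset of `active k`. -/
lemma mem_active_of_UD_le (hbm : ∀ i, MonotoneOn (b i) (Set.Ici 0))
    (hbconc : ∀ i, ConcaveOn ℝ (Set.Ici 0) (b i)) (hK : active b c K = ∅) {Z : Fin n → ℕ}
    (hZ : ∀ i, UD b c (fairProfile b c K) i ≤ UD b c Z i) (k : ℕ) :
    ∀ j, k < Z j → j ∈ active b c (k + 1) := by
  induction k using Nat.strong_induction_on with
  | _ k ih =>
  have hge : ∀ i, k < Z i → k ≤ fairProfile b c K i := by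
    intro i hi
    by_contra! hx
    have hgain :=
      le_gain_of_UD_le hbm hbconc hK (hx.trans hi) (fun l hl => ih l (by omega)) (hZ i)
    have hcard : #{j | fairProfile b c K i < Z j} ≤ #(active b c (fairProfile b c K i + 1)) + 1 :=
      (card_le_card fun j hj => ih _ hx j (by simpa using hj)).trans (Nat.le_succ _)
    linarith [gain_lt_of_fairProfile hbm hK i,
      gain_mono (hbm i) (accrued b c (fairProfile b c K i)) hcard]
  set S := ({j | k < Z j} : Finset (Fin n)) ∪ active b c (k + 1)
  have hSA : S ⊆ active b c k := union_subset
    (fun j hj => (mem_active_iff hK).2 (hge j (by simpa using hj)))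
    (active_antitone (Nat.le_succ k))
  have hS : IsViable b c (accrued b c k) S := by
    intro j hj
    by_cases hj' : j ∈ active b c (k + 1)
    · exact (le_gain_of_mem_active_succ hbm hj').trans
        (gain_mono (hbm j) _ (card_le_card subset_union_right))
    · have hZj : k < Z j := by simpa [S, hj'] using hj
      have hxj : fairProfile b c K j = k :=
        le_antisymm (not_lt.1 fun h => hj' ((mem_active_iff hK).2 h)) (hge j hZj)
      have hgain := le_gain_of_UD_le hbm hbconc hK (hxj ▸ hZj)
        (fun l hl => ih l (hxj ▸ hl)) (hZ j)
      rw [hxj] at hgain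
      exact hgain.trans (gain_mono (hbm j) _ (card_le_card subset_union_left))
  intro j hj
  rw [active_succ]
  exact subset_core hSA hS (mem_union_left _ (by simpa using hj))

lemma fairProfile_not_dominated (hbm : ∀ i, MonotoneOn (b i) (Set.Ici 0))
    (hbconc : ∀ i, ConcaveOn ℝ (Set.Ici 0) (b i)) (hK : active b c K = ∅) :
    ¬ ∃ Z : Fin n → ℕ, (∀ i, UD b c (fairProfile b c K) i ≤ UD b c Z i) ∧
      ∃ j, UD b c (fairProfile b c K) j < UD b c Z j := by
  rintro ⟨Z, hZ, j, hj⟩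
  exact hj.not_ge <|
    UD_le_fairProfile hbm hK fun l _ => mem_active_of_UD_le hbm hbconc hK hZ l

end Pareto

end FairExchange

open FairExchange in
theorem discrete_exists_pareto_undominated_equilibrium_general (n : ℕ)
    (b : Fin n → ℝ → ℝ) (c : Fin n → ℝ)
    (hc : ∀ i, 0 < c i)
    (hbm : ∀ i, MonotoneOn (b i) (Set.Ici 0))
    (hbconc : ∀ i, ConcaveOn ℝ (Set.Ici 0) (b i))
    (hvanish : ∀ i, Filter.Tendsto (fun t : ℝ => b i (t + 1) - b i t)
      Filter.atTop (nhds 0)) :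
    ∃ Xstar : Fin n → ℕ, IsNED b c Xstar ∧
      ¬ ∃ X' : Fin n → ℕ,
        (∀ i, UD b c Xstar i ≤ UD b c X' i) ∧
        (∃ j, UD b c Xstar j < UD b c X' j) := by
  obtain ⟨K, hK⟩ := exists_active_eq_empty hc hbm hbconc hvanish
  exact ⟨fairProfile b c K, isNED_fairProfile hbm hbconc hK,
    fairProfile_not_dominated hbm hbconc hK⟩

/-- The discrete fair-exchange game admits a globally Pareto-undominated pure Nash
equilibrium: there is an integer equilibrium profile `X*` such that no integer profile
Pareto-dominates it. -/
theorem discrete_exists_pareto_undominated_equilibrium (n : ℕ) (hn : 1 ≤ n)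
    (b : Fin n → ℝ → ℝ) (c : Fin n → ℝ)
    (hc : ∀ i, 0 < c i)
    (hbc : ∀ i, ContinuousOn (b i) (Set.Ici 0))
    (hbm : ∀ i, MonotoneOn (b i) (Set.Ici 0))
    (hbconc : ∀ i, ConcaveOn ℝ (Set.Ici 0) (b i))
    (hvanish : ∀ i, Filter.Tendsto (fun t : ℝ => b i (t + 1) - b i t)
      Filter.atTop (nhds 0)) :
    ∃ Xstar : Fin n → ℕ, IsNED b c Xstar ∧
      ¬ ∃ X' : Fin n → ℕ,
        (∀ i, UD b c Xstar i ≤ UD b c X' i) ∧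
        (∃ j, UD b c Xstar j < UD b c X' j) :=
  discrete_exists_pareto_undominated_equilibrium_general n b c hc hbm hbconc hvanish
end
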